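/- arXiv:2401.17845 — 4 statements merged into one kernel-verified Lean document; each statement's English description precedes it below -/
import Mathlib

section
/- Let n ≥ 4 and let G^* = K_1 ∨ (K_{n-2} ∪ K_1). Then every proper subgraph G of G^* satisfies ρ(G) ≤ n − 2, with equality only if G is isomorphic to K_{n-1} or to K_{n-1} ∪ K_1. -/
open SimpleGraph

/-- `K_1 ∨ (K_{n-2} ∪ K_1)` on `Fin n`: vertex `0` is dominating, vertices
`0,…,n-2` form a clique, and vertex `n-1` is adjacent only to `0`. -/
def Gstar (n : ℕ) : SimpleGraph (Fin n) where
  Adj x y := x ≠ y ∧ (x.val = 0 ∨ y.val = 0 ∨ (x.val ≠ n - 1 ∧ y.val ≠ n - 1))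
  symm := by constructor; intro x y h; tauto
  loopless := by constructor; intro x h; exact h.1 rfl

/-- `K_2 ∨ 3K_1` on `Fin 5`: vertices `0,1` are adjacent to everything. -/
def K2join3K1 : SimpleGraph (Fin 5) where
  Adj x y := x ≠ y ∧ (x.val < 2 ∨ y.val < 2)
  symm := by constructor; intro x y h; tauto
  loopless := by constructor; intro x h; exact h.1 rfl

/-- `K_{n-1} ∪ K_1` on `Fin n`: vertex `n-1` is isolated, the rest form a clique. -/
def KcupK1 (n : ℕ) : SimpleGraph (Fin n) where
  Adj x y := x ≠ y ∧ x.val ≠ n - 1 ∧ y.val ≠ n - 1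
  symm := by constructor; intro x y h; tauto
  loopless := by constructor; intro x h; exact h.1 rfl

/-- The real adjacency matrix of a graph. -/
noncomputable def adjMat {V : Type*} [Fintype V] (G : SimpleGraph V) : Matrix V V ℝ :=
  letI := Classical.decRel G.Adj
  G.adjMatrix ℝ

lemma adjMat_isHermitian {V : Type*} [Fintype V] (G : SimpleGraph V) :
    (adjMat G).IsHermitian := by
  letI := Classical.decRel G.Adj
  ext i j
  simp [adjMat, Matrix.conjTranspose_apply, SimpleGraph.adjMatrix, G.adj_comm i j]

/-- The adjacency spectral radius of a graph, i.e. the largest eigenvalue of its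
adjacency matrix. -/
noncomputable def specRad {V : Type*} [Fintype V] [DecidableEq V] (G : SimpleGraph V) : ℝ :=
  ⨆ i, (adjMat_isHermitian G).eigenvalues i

/-- The signless Laplacian matrix `D + A` of a graph. -/
noncomputable def signlessLap {V : Type*} [Fintype V] [DecidableEq V] (G : SimpleGraph V) :
    Matrix V V ℝ :=
  letI := Classical.decRel G.Adj
  Matrix.diagonal (fun v => (G.degree v : ℝ)) + adjMat G

lemma signlessLap_isHermitian {V : Type*} [Fintype V] [DecidableEq V] (G : SimpleGraph V) :
    (signlessLap G).IsHermitian := by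
  letI := Classical.decRel G.Adj
  have h1 : (Matrix.diagonal (fun v => (G.degree v : ℝ))).IsHermitian :=
    Matrix.isHermitian_diagonal _
  exact h1.add (adjMat_isHermitian G)

/-- The signless Laplacian spectral radius of a graph. -/
noncomputable def specRadS {V : Type*} [Fintype V] [DecidableEq V] (G : SimpleGraph V) : ℝ :=
  ⨆ i, (signlessLap_isHermitian G).eigenvalues i

/-- `z` is a neighbor of `y` outside of `N(x) ∪ {x}`. -/
def kelSet {V : Type*} (G : SimpleGraph V) (x y z : V) : Prop :=
  G.Adj y z ∧ ¬ G.Adj x z ∧ z ≠ x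

/-- The Kelmans transformation of `G` from `x` to `y`: erase all edges between `y`
and `N(y) \ (N(x) ∪ {x})` and add all edges between `x` and `N(y) \ (N(x) ∪ {x})`. -/
def kelmans {V : Type*} (G : SimpleGraph V) (x y : V) : SimpleGraph V where
  Adj a b :=
    (G.Adj a b ∧ ¬(a = y ∧ kelSet G x y b) ∧ ¬(b = y ∧ kelSet G x y a)) ∨
    (a = x ∧ kelSet G x y b) ∨ (b = x ∧ kelSet G x y a)
  symm := by constructor; intro a b h; tauto
  loopless := by
    constructor
    intro a h
    rcases h with ⟨h, -, -⟩ | ⟨rfl, h⟩ | ⟨rfl, h⟩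
    · exact G.loopless.irrefl a h
    · exact h.2.2 rfl
    · exact h.2.2 rfl

/-- A family `𝒢` of `n` graphs on the vertex set `Fin n` admits a rainbow Hamiltonian
cycle: there is a Hamiltonian cycle (in the complete graph) whose edges can be
assigned distinct indices `i` such that each edge belongs to the graph `𝒢 i`. -/
def HasRainbowHamCycle {n : ℕ} (𝒢 : Fin n → SimpleGraph (Fin n)) : Prop :=
  ∃ (v : Fin n) (p : (⊤ : SimpleGraph (Fin n)).Walk v v),
    p.IsHamiltonianCycle ∧
    ∃ c : Fin p.edges.length → Fin n,
      Function.Injective c ∧ ∀ i, p.edges.get i ∈ (𝒢 (c i)).edgeSet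


section helpers
open Finset Matrix


lemma sum_ext_zero {α : Type*} [Fintype α] (s : Set α) [Fintype s] [DecidablePred (· ∈ s)]
    (f : α → ℝ) (hf : ∀ u, u ∉ s → f u = 0) : ∑ u, f u = ∑ i : s, f ↑i := by
  rw [← Finset.sum_subset s.toFinset.subset_univ (fun x _ hx => hf x (by simpa using hx))]
  exact Finset.sum_subtype s.toFinset (by simp) f

lemma sum_ite_ne {n : ℕ} (C : Finset (Fin n)) (u : Fin n) (hu : u ∈ C) (f : Fin n → ℝ) :
    ∑ v ∈ C, (if u ≠ v then f v else 0) = ∑ v ∈ C, f v - f u := by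
  rw [Finset.sum_ite, Finset.sum_const_zero, add_zero, Finset.filter_ne,
    Finset.sum_erase_eq_sub hu]

/-- Main quadratic identity for the clique part. -/
lemma clique_identity {n : ℕ} (hn : 4 ≤ n) (w : Fin n) (hw : w.val = n - 1) (y : Fin n → ℝ) :
    ((n:ℝ) - 2) * ∑ u, (y u)^2
      - ∑ u, ∑ v, (if u ≠ v ∧ u ≠ w ∧ v ≠ w then y u * y v else 0)
    = (1/2) * ∑ u ∈ Finset.univ.erase w, ∑ v ∈ Finset.univ.erase w, (y u - y v)^2
      + ((n:ℝ) - 2) * (y w)^2 := by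
  set C := Finset.univ.erase w with hC
  set s := ∑ u ∈ C, y u with hs
  set S2 := ∑ u ∈ C, (y u)^2 with hS2
  have hcard : (C.card : ℝ) = (n:ℝ) - 1 := by
    rw [hC, Finset.card_erase_of_mem (mem_univ w)]
    simp only [Finset.card_univ, Fintype.card_fin]
    have : 1 ≤ n := by omega
    push_cast [Nat.cast_sub this]
    ring
  have h1 : ∑ u, (y u)^2 = S2 + (y w)^2 := (Finset.sum_erase_add _ _ (mem_univ w)).symm
  have h2 : ∑ u, ∑ v, (if u ≠ v ∧ u ≠ w ∧ v ≠ w then y u * y v else 0) = s^2 - S2 := by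
    have houter : ∀ u, ∑ v, (if u ≠ v ∧ u ≠ w ∧ v ≠ w then y u * y v else 0)
        = ∑ v ∈ C, (if u ≠ v ∧ u ≠ w ∧ v ≠ w then y u * y v else 0) := by
      intro u
      rw [← Finset.sum_erase_add Finset.univ _ (mem_univ w)]
      simp [hC]
    rw [← Finset.sum_erase_add Finset.univ _ (mem_univ w), houter w]
    have : ∑ v ∈ C, (if w ≠ v ∧ w ≠ w ∧ v ≠ w then y w * y v else 0) = 0 := by
      apply Finset.sum_eq_zero; intro v _; simp
    rw [this, add_zero]
    have hinner : ∀ u ∈ C, ∑ v, (if u ≠ v ∧ u ≠ w ∧ v ≠ w then y u * y v else 0)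
        = y u * s - y u * y u := by
      intro u hu
      rw [houter u]
      have hcongr : ∑ v ∈ C, (if u ≠ v ∧ u ≠ w ∧ v ≠ w then y u * y v else 0)
          = ∑ v ∈ C, (if u ≠ v then y u * y v else 0) := by
        apply Finset.sum_congr rfl
        intro v hv
        have hvw : v ≠ w := by simp [hC] at hv; exact hv
        have huw : u ≠ w := by simp [hC] at hu; exact hu
        simp [hvw, huw]
      rw [hcongr, sum_ite_ne C u hu (fun v => y u * y v), ← Finset.mul_sum, ← hs]
    rw [Finset.sum_congr rfl hinner, Finset.sum_sub_distrib, ← Finset.sum_mul, ← hs]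
    have : ∑ u ∈ C, y u * y u = S2 := by rw [hS2]; apply Finset.sum_congr rfl; intro u _; ring
    rw [this]; ring
  have h3 : ∑ u ∈ C, ∑ v ∈ C, (y u - y v)^2 = 2*((n:ℝ)-1)*S2 - 2*s^2 := by
    have hinner : ∀ u ∈ C, ∑ v ∈ C, (y u - y v)^2
        = (C.card : ℝ) * (y u)^2 - 2 * y u * s + S2 := by
      intro u _
      have : ∀ v ∈ C, (y u - y v)^2 = (y u)^2 - 2 * y u * y v + (y v)^2 := by
        intro v _; ring
      rw [Finset.sum_congr rfl this]
      rw [Finset.sum_add_distrib, Finset.sum_sub_distrib, Finset.sum_const, ← hS2,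
        ← Finset.mul_sum, Finset.mul_sum, ← Finset.mul_sum]
      rw [← hs]
      push_cast
      ring
    rw [Finset.sum_congr rfl hinner]
    have e1 : ∑ u ∈ C, (C.card : ℝ) * (y u)^2 = (C.card : ℝ) * S2 := by
      rw [← Finset.mul_sum, ← hS2]
    have e2 : ∑ u ∈ C, 2 * y u * s = 2 * s * s := by
      have h : ∀ u ∈ C, 2 * y u * s = (2*s) * y u := fun u _ => by ring
      rw [Finset.sum_congr rfl h, ← Finset.mul_sum, ← hs]
    have e3 : ∑ _u ∈ C, S2 = (C.card : ℝ) * S2 := by rw [Finset.sum_const, nsmul_eq_mul]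
    rw [Finset.sum_add_distrib, Finset.sum_sub_distrib, e1, e2, e3, hcard]; ring
  rw [h1, h2, h3]; ring

lemma lemA_le {n : ℕ} (hn : 4 ≤ n) (w : Fin n) (hw : w.val = n - 1) (y : Fin n → ℝ) :
    ∑ u, ∑ v, (if u ≠ v ∧ u ≠ w ∧ v ≠ w then y u * y v else 0)
      ≤ ((n:ℝ) - 2) * ∑ u, (y u)^2 := by
  have hid := clique_identity hn w hw y
  have hT : (0:ℝ) ≤ ∑ u ∈ Finset.univ.erase w, ∑ v ∈ Finset.univ.erase w, (y u - y v)^2 :=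
    Finset.sum_nonneg fun u _ => Finset.sum_nonneg fun v _ => sq_nonneg _
  have hn' : (4:ℝ) ≤ (n:ℝ) := by exact_mod_cast hn
  nlinarith [sq_nonneg (y w)]

lemma lemA_eq {n : ℕ} (hn : 4 ≤ n) (w : Fin n) (hw : w.val = n - 1) (y : Fin n → ℝ)
    (heq : ∑ u, ∑ v, (if u ≠ v ∧ u ≠ w ∧ v ≠ w then y u * y v else 0)
      = ((n:ℝ) - 2) * ∑ u, (y u)^2) :
    (∀ u v, u ≠ w → v ≠ w → y u = y v) ∧ y w = 0 := by
  have hid := clique_identity hn w hw y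
  have hT : (0:ℝ) ≤ ∑ u ∈ Finset.univ.erase w, ∑ v ∈ Finset.univ.erase w, (y u - y v)^2 :=
    Finset.sum_nonneg fun u _ => Finset.sum_nonneg fun v _ => sq_nonneg _
  have hn' : (4:ℝ) ≤ (n:ℝ) := by exact_mod_cast hn
  have hw2 : (y w)^2 = 0 := by nlinarith [sq_nonneg (y w)]
  have hT0 : ∑ u ∈ Finset.univ.erase w, ∑ v ∈ Finset.univ.erase w, (y u - y v)^2 = 0 := by
    nlinarith [sq_nonneg (y w)]
  constructor
  · intro u v hu hv
    have h1 := (Finset.sum_eq_zero_iff_of_nonneg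
      (fun u _ => Finset.sum_nonneg fun v _ => sq_nonneg (y u - y v))).mp hT0 u (by simp [hu])
    have h2 := (Finset.sum_eq_zero_iff_of_nonneg
      (fun v _ => sq_nonneg (y u - y v))).mp h1 v (by simp [hv])
    have := pow_eq_zero_iff (n := 2) (by norm_num) |>.mp h2
    linarith [this]
  · exact pow_eq_zero_iff (n := 2) (by norm_num) |>.mp hw2

lemma gstar_sum {n : ℕ} (hn : 4 ≤ n) (w z : Fin n) (hw : w.val = n - 1) (hz : z.val = 0)
    (y : Fin n → ℝ) :
    ∑ u, ∑ v, (if u ≠ v ∧ (u = z ∨ v = z ∨ (u ≠ w ∧ v ≠ w)) then y u * y v else 0)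
    = (∑ u, ∑ v, (if u ≠ v ∧ u ≠ w ∧ v ≠ w then y u * y v else 0)) + 2 * (y z * y w) := by
  have hzw : z ≠ w := by
    intro h; rw [h] at hz; omega
  have key : ∀ u v : Fin n,
      (if u ≠ v ∧ (u = z ∨ v = z ∨ (u ≠ w ∧ v ≠ w)) then y u * y v else 0)
      = (if u ≠ v ∧ u ≠ w ∧ v ≠ w then y u * y v else 0)
        + (if (u = z ∧ v = w) ∨ (u = w ∧ v = z) then y u * y v else 0) := by
    intro u v
    by_cases h1 : u = w <;> by_cases h2 : v = w <;> by_cases h3 : u = z <;> by_cases h4 : v = z <;>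
      by_cases h5 : u = v <;> simp_all <;> tauto
  have hsum : ∑ u, ∑ v, ((if u ≠ v ∧ u ≠ w ∧ v ≠ w then y u * y v else 0)
        + (if (u = z ∧ v = w) ∨ (u = w ∧ v = z) then y u * y v else 0))
      = (∑ u, ∑ v, (if u ≠ v ∧ u ≠ w ∧ v ≠ w then y u * y v else 0))
        + ∑ u, ∑ v, (if (u = z ∧ v = w) ∨ (u = w ∧ v = z) then y u * y v else 0) := by
    rw [← Finset.sum_add_distrib]
    exact Finset.sum_congr rfl fun u _ => Finset.sum_add_distrib
  have hpair : ∑ u, ∑ v, (if (u = z ∧ v = w) ∨ (u = w ∧ v = z) then y u * y v else 0)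
      = 2 * (y z * y w) := by
    rw [← Fintype.sum_prod_type']
    rw [Fintype.sum_eq_add (a := ((z, w) : Fin n × Fin n)) (b := ((w, z) : Fin n × Fin n))
      (by simp [hzw]) ?_]
    · simp [hzw, hzw.symm]; ring
    · rintro ⟨u, v⟩ ⟨hc1, hc2⟩
      simp only [Prod.mk.injEq] at hc1 hc2 ⊢
      rw [if_neg]
      rintro (⟨rfl, rfl⟩ | ⟨rfl, rfl⟩) <;> simp_all
  calc _ = _ := Finset.sum_congr rfl fun u _ => Finset.sum_congr rfl fun v _ => key u v
  _ = _ := by rw [hsum, hpair]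

lemma lemB_aux {n : ℕ} (hn : 4 ≤ n) (w z i j : Fin n) (hw : w.val = n - 1) (hz : z.val = 0)
    (hij : i ≠ j) (hiw : i ≠ w) (hjw : j ≠ w) (hjz : j ≠ z) (y : Fin n → ℝ)
    (hy : ∀ u, 0 ≤ y u) (hy0 : y ≠ 0) :
    ∑ u, ∑ v, (if u ≠ v ∧ (u = z ∨ v = z ∨ (u ≠ w ∧ v ≠ w)) then y u * y v else 0)
      - 2 * (y i * y j) < ((n:ℝ) - 2) * ∑ u, (y u)^2 := by
  by_contra hcon
  push_neg at hcon
  have hzw : z ≠ w := by intro h; rw [h] at hz; omega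
  rw [gstar_sum hn w z hw hz y] at hcon
  have hid := clique_identity hn w hw y
  set C := Finset.univ.erase w with hC
  set T := ∑ u ∈ C, ∑ v ∈ C, (y u - y v)^2 with hT
  set t := y w with ht'
  set c := y z with hc'
  have hD : (1/2) * T + ((n:ℝ)-2)*t^2 - 2*(c*t) + 2*(y i * y j) ≤ 0 := by linarith
  set P := ∑ v ∈ C.erase z, (c - y v)^2 with hP
  have hzC : z ∈ C := by simp [hC, hzw]
  have hTP : 2 * P ≤ T := by
    have h1 : ∑ v ∈ C, (y z - y v)^2 = P := by
      rw [← Finset.sum_erase_add _ _ hzC, ← hc']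
      simp [hP]
    have h2 : ∀ u ∈ C.erase z, (y u - y z)^2 ≤ ∑ v ∈ C, (y u - y v)^2 := fun u _ =>
      Finset.single_le_sum (f := fun v => (y u - y v)^2) (fun v _ => sq_nonneg _) hzC
    have h3 : P ≤ ∑ u ∈ C.erase z, ∑ v ∈ C, (y u - y v)^2 := by
      calc P = ∑ u ∈ C.erase z, (y u - y z)^2 :=
            Finset.sum_congr rfl (fun u _ => by rw [← hc']; ring)
        _ ≤ _ := Finset.sum_le_sum h2
    have h4 : T = ∑ u ∈ C.erase z, (∑ v ∈ C, (y u - y v)^2) + ∑ v ∈ C, (y z - y v)^2 :=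
      (Finset.sum_erase_add _ _ hzC).symm
    linarith
  have hjC : j ∈ C.erase z := by simp [hC, hjz, hjw]
  have hn' : (4:ℝ) ≤ (n:ℝ) := by exact_mod_cast hn
  rcases eq_or_ne i z with hiz | hiz
  · -- missing edge at the dominating vertex
    rw [show y i = c from by rw [hiz, hc'] ] at hD
    set S := ∑ v ∈ (C.erase z).erase j, (c - y v)^2 with hS
    have hsplit : (c - y j)^2 + S = P :=
      Finset.add_sum_erase _ (fun v => (c - y v)^2) hjC
    have hS0 : (0:ℝ) ≤ S := Finset.sum_nonneg fun v _ => sq_nonneg _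
    have heq2 : P + ((n:ℝ)-2)*t^2 - 2*(c*t) + 2*(c * y j)
        = S + (y j)^2 + (c-t)^2 + ((n:ℝ)-3)*t^2 := by rw [← hsplit]; ring
    have hkey : S + (y j)^2 + (c-t)^2 + ((n:ℝ)-3)*t^2 ≤ 0 := by linarith
    have hgap : 0 ≤ ((n:ℝ)-4)*t^2 := mul_nonneg (by linarith) (sq_nonneg t)
    have hA : (0:ℝ) ≤ (y j)^2 := sq_nonneg _
    have hB : (0:ℝ) ≤ (c-t)^2 := sq_nonneg _
    have hsplitt : ((n:ℝ)-3)*t^2 = ((n:ℝ)-4)*t^2 + t^2 := by ring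
    have ht2 : t^2 ≤ 0 := by linarith
    have ht20 : t^2 = 0 := le_antisymm ht2 (sq_nonneg t)
    have ht0 : t = 0 := pow_eq_zero_iff (n := 2) (by norm_num) |>.mp ht20
    have hCc0 : ((n:ℝ)-3)*t^2 = 0 := by rw [ht20, mul_zero]
    have hc0 : c = 0 := by
      have h7 : (c-t)^2 ≤ 0 := by linarith
      have := pow_eq_zero_iff (n := 2) (by norm_num) |>.mp (le_antisymm h7 hB)
      linarith
    have hj0 : y j = 0 := by
      have h7 : (y j)^2 ≤ 0 := by linarith
      have := pow_eq_zero_iff (n := 2) (by norm_num) |>.mp (le_antisymm h7 hA)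
      linarith
    have hS00 : S = 0 := le_antisymm (by linarith) hS0
    apply hy0
    funext u
    show y u = 0
    rcases eq_or_ne u w with rfl | huw
    · exact ht0
    rcases eq_or_ne u z with rfl | huz
    · exact hc0
    rcases eq_or_ne u j with rfl | huj
    · exact hj0
    have hu : u ∈ (C.erase z).erase j := by simp [hC, huw, huz, huj]
    
    have := (Finset.sum_eq_zero_iff_of_nonneg (fun v _ => sq_nonneg (c - y v))).mp hS00 u hu
    have := pow_eq_zero_iff (n := 2) (by norm_num) |>.mp this
    linarith
  · have hiC : i ∈ (C.erase z).erase j := by simp [hC, hij, hiz, hiw]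
    set S := ∑ v ∈ ((C.erase z).erase j).erase i, (c - y v)^2 with hS
    have hsplitj : (c - y j)^2 + ∑ v ∈ (C.erase z).erase j, (c - y v)^2 = P :=
      Finset.add_sum_erase _ (fun v => (c - y v)^2) hjC
    have hspliti : (c - y i)^2 + S = ∑ v ∈ (C.erase z).erase j, (c - y v)^2 :=
      Finset.add_sum_erase _ (fun v => (c - y v)^2) hiC
    have hS0 : (0:ℝ) ≤ S := Finset.sum_nonneg fun v _ => sq_nonneg _
    have heq2 : P + ((n:ℝ)-2)*t^2 - 2*(c*t) + 2*(y i * y j)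
        = S + (c - y i - y j)^2 + (c-t)^2 + ((n:ℝ)-3)*t^2 := by
      rw [← hsplitj, ← hspliti]; ring
    have hkey : S + (c - y i - y j)^2 + (c-t)^2 + ((n:ℝ)-3)*t^2 ≤ 0 := by linarith
    have hgap : 0 ≤ ((n:ℝ)-4)*t^2 := mul_nonneg (by linarith) (sq_nonneg t)
    have hA : (0:ℝ) ≤ (c - y i - y j)^2 := sq_nonneg _
    have hB : (0:ℝ) ≤ (c-t)^2 := sq_nonneg _
    have hsplitt : ((n:ℝ)-3)*t^2 = ((n:ℝ)-4)*t^2 + t^2 := by ring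
    have ht2 : t^2 ≤ 0 := by linarith
    have ht20 : t^2 = 0 := le_antisymm ht2 (sq_nonneg t)
    have ht0 : t = 0 := pow_eq_zero_iff (n := 2) (by norm_num) |>.mp ht20
    have hCc0 : ((n:ℝ)-3)*t^2 = 0 := by rw [ht20, mul_zero]
    have hc0 : c = 0 := by
      have h7 : (c-t)^2 ≤ 0 := by linarith
      have := pow_eq_zero_iff (n := 2) (by norm_num) |>.mp (le_antisymm h7 hB)
      linarith
    have hij0 : y i + y j = 0 := by
      have h7 : (c - y i - y j)^2 ≤ 0 := by linarith
      have := pow_eq_zero_iff (n := 2) (by norm_num) |>.mp (le_antisymm h7 hA)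
      linarith
    have hi0 : y i = 0 := by have := hy i; have := hy j; linarith
    have hj0 : y j = 0 := by have := hy i; have := hy j; linarith
    have hS00 : S = 0 := le_antisymm (by linarith) hS0
    apply hy0
    funext u
    show y u = 0
    rcases eq_or_ne u w with rfl | huw
    · exact ht0
    rcases eq_or_ne u z with rfl | huz
    · exact hc0
    rcases eq_or_ne u j with rfl | huj
    · exact hj0
    rcases eq_or_ne u i with rfl | hui
    · exact hi0
    have hu : u ∈ ((C.erase z).erase j).erase i := by simp [hC, huw, huz, huj, hui]
    have := (Finset.sum_eq_zero_iff_of_nonneg (fun v _ => sq_nonneg (c - y v))).mp hS00 u hu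
    have := pow_eq_zero_iff (n := 2) (by norm_num) |>.mp this
    linarith

lemma lemB {n : ℕ} (hn : 4 ≤ n) (w z i j : Fin n) (hw : w.val = n - 1) (hz : z.val = 0)
    (hij : i ≠ j) (hiw : i ≠ w) (hjw : j ≠ w) (y : Fin n → ℝ)
    (hy : ∀ u, 0 ≤ y u) (hy0 : y ≠ 0) :
    ∑ u, ∑ v, (if u ≠ v ∧ (u = z ∨ v = z ∨ (u ≠ w ∧ v ≠ w)) then y u * y v else 0)
      - 2 * (y i * y j) < ((n:ℝ) - 2) * ∑ u, (y u)^2 := by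
  rcases eq_or_ne j z with hjz | hjz
  · have hiz : i ≠ z := fun h => hij (h.trans hjz.symm)
    have h := lemB_aux hn w z j i hw hz hij.symm hjw hiw hiz y hy hy0
    have hcomm : y j * y i = y i * y j := mul_comm _ _
    linarith
  · exact lemB_aux hn w z i j hw hz hij hiw hjw hjz y hy hy0

lemma adjMat_cases {V : Type*} [Fintype V] (G : SimpleGraph V) (i j : V) :
    (G.Adj i j ∧ adjMat G i j = 1) ∨ (¬ G.Adj i j ∧ adjMat G i j = 0) := by
  by_cases h : G.Adj i j
  · exact Or.inl ⟨h, by simp [adjMat, h]⟩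
  · exact Or.inr ⟨h, by simp [adjMat, h]⟩

lemma adjMat_nonneg {V : Type*} [Fintype V] (G : SimpleGraph V) (i j : V) :
    0 ≤ adjMat G i j := by
  rcases adjMat_cases G i j with ⟨_, h⟩ | ⟨_, h⟩ <;> rw [h] <;> norm_num

lemma specRad_le_quadform {V : Type*} [Fintype V] [DecidableEq V] [Nonempty V]
    (G : SimpleGraph V) :
    ∃ x : V → ℝ, (∀ i, 0 ≤ x i) ∧ (∑ i, (x i)^2 = 1) ∧
      specRad G ≤ ∑ i, ∑ j, adjMat G i j * (x i * x j) := by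
  set hA := adjMat_isHermitian G with hhA
  obtain ⟨i₀, hi₀⟩ := Finite.exists_max hA.eigenvalues
  have hsr : specRad G = hA.eigenvalues i₀ :=
    le_antisymm (ciSup_le hi₀) (le_ciSup (Set.Finite.bddAbove (Set.finite_range _)) i₀)
  set v : V → ℝ := ⇑(hA.eigenvectorBasis i₀) with hv
  have hmv : adjMat G *ᵥ v = hA.eigenvalues i₀ • v := hA.mulVec_eigenvectorBasis i₀
  have hnorm : ∑ i, (v i)^2 = 1 := by
    have h1 : ‖(hA.eigenvectorBasis i₀ : EuclideanSpace ℝ V)‖ = 1 :=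
      hA.eigenvectorBasis.orthonormal.1 i₀
    rw [EuclideanSpace.norm_eq] at h1
    have h2 : ∑ i, ‖v i‖^2 = 1 := by
      have h3 := congrArg (· ^ 2) h1
      simpa [Real.sq_sqrt (Finset.sum_nonneg fun i _ => sq_nonneg _)] using h3
    simpa [Real.norm_eq_abs, sq_abs] using h2
  have hquad : specRad G = ∑ i, ∑ j, adjMat G i j * (v i * v j) := by
    calc specRad G = ∑ i, (specRad G * v i) * v i := by
          have : ∑ i, (specRad G * v i) * v i = specRad G * ∑ i, (v i)^2 := by
            rw [Finset.mul_sum]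
            exact Finset.sum_congr rfl fun i _ => by ring
          rw [this, hnorm, mul_one]
    _ = ∑ i, ((adjMat G *ᵥ v) i) * v i := by
          rw [hmv, hsr]
          exact Finset.sum_congr rfl fun i _ => by simp [smul_eq_mul]
    _ = ∑ i, ∑ j, adjMat G i j * (v i * v j) := by
          refine Finset.sum_congr rfl fun i _ => ?_
          rw [Matrix.mulVec, dotProduct, Finset.sum_mul]
          exact Finset.sum_congr rfl fun j _ => by ring
  refine ⟨fun i => |v i|, fun i => abs_nonneg _, by simpa [sq_abs] using hnorm, ?_⟩
  rw [hquad]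
  refine Finset.sum_le_sum fun i _ => Finset.sum_le_sum fun j _ => ?_
  have h4 : v i * v j ≤ |v i| * |v j| := by rw [← abs_mul]; exact le_abs_self _
  exact mul_le_mul_of_nonneg_left h4 (adjMat_nonneg G i j)

end helpers

/-- Every proper subgraph of `G^* = K_1 ∨ (K_{n-2} ∪ K_1)` has spectral radius at
most `n - 2`, with equality only for `K_{n-1}` or `K_{n-1} ∪ K_1`. -/
theorem specRad_proper_subgraph_Gstar {n : ℕ} (hn : 4 ≤ n)
    (G' : (Gstar n).Subgraph) [Fintype G'.verts] (hne : G' ≠ ⊤) :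
    specRad G'.coe ≤ (n : ℝ) - 2 ∧
      (specRad G'.coe = (n : ℝ) - 2 →
        Nonempty (G'.coe ≃g completeGraph (Fin (n - 1))) ∨
        Nonempty (G'.coe ≃g KcupK1 n)) := by
  classical
  have hn0 : 0 < n := by omega
  have hn' : (4:ℝ) ≤ (n:ℝ) := by exact_mod_cast hn
  set w : Fin n := ⟨n-1, by omega⟩ with hwdef
  set z : Fin n := ⟨0, by omega⟩ with hzdef
  have hw : w.val = n - 1 := rfl
  have hz : z.val = 0 := rfl
  have hzw : z ≠ w := by
    intro h
    have : z.val = w.val := by rw [h]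
    rw [hz, hw] at this; omega
  have hGadj : ∀ u v : Fin n, (Gstar n).Adj u v ↔
      (u ≠ v ∧ (u = z ∨ v = z ∨ (u ≠ w ∧ v ≠ w))) := by
    intro u v
    show (u ≠ v ∧ (u.val = 0 ∨ v.val = 0 ∨ (u.val ≠ n - 1 ∧ v.val ≠ n - 1))) ↔ _
    have e1 : u = z ↔ u.val = 0 := by rw [Fin.ext_iff, hz]
    have e2 : v = z ↔ v.val = 0 := by rw [Fin.ext_iff, hz]
    have e3 : u = w ↔ u.val = n - 1 := by rw [Fin.ext_iff, hw]
    have e4 : v = w ↔ v.val = n - 1 := by rw [Fin.ext_iff, hw]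
    simp only [ne_eq, e1, e2, e3, e4]
  rcases isEmpty_or_nonempty ↥G'.verts with hVempty | hVne
  · have h0 : specRad G'.coe = 0 := Real.iSup_of_isEmpty _
    constructor
    · rw [h0]; linarith
    · intro heq; rw [h0] at heq; exfalso; linarith
  obtain ⟨x, hxnn, hxnorm, hxquad⟩ := specRad_le_quadform G'.coe
  set y : Fin n → ℝ := fun u => if h : u ∈ G'.verts then x ⟨u, h⟩ else 0 with hydef
  have hynn : ∀ u, 0 ≤ y u := by
    intro u; rw [hydef]; dsimp only; split
    · exact hxnn _
    · exact le_refl 0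
  have hyoff : ∀ u, u ∉ G'.verts → y u = 0 := by
    intro u hu; rw [hydef]; dsimp only; rw [dif_neg hu]
  have hyx : ∀ i : ↥G'.verts, y ↑i = x i := by
    intro i; rw [hydef]; dsimp only; rw [dif_pos i.2]
  have hynorm : ∑ u, (y u)^2 = 1 := by
    rw [sum_ext_zero G'.verts (fun u => (y u)^2)
      (fun u hu => by simp only [hyoff u hu]; ring)]
    rw [← hxnorm]
    exact Finset.sum_congr rfl fun i _ => by rw [hyx]
  have hy0 : y ≠ 0 := by
    intro h; rw [h] at hynorm; simp at hynorm
  -- transfer the quadratic form to Fin n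
  set Q : ℝ := ∑ u, ∑ v, (if G'.Adj u v then (1:ℝ) else 0) * (y u * y v) with hQdef
  have htrans : ∑ i, ∑ j, adjMat G'.coe i j * (x i * x j) = Q := by
    rw [hQdef]
    rw [sum_ext_zero G'.verts (fun u => ∑ v, (if G'.Adj u v then (1:ℝ) else 0) * (y u * y v))
      (fun u hu => by exact Finset.sum_eq_zero fun v _ => by rw [hyoff u hu]; ring)]
    refine (Finset.sum_congr rfl fun i _ => ?_).symm
    rw [sum_ext_zero G'.verts (fun v => (if G'.Adj ↑i v then (1:ℝ) else 0) * (y ↑i * y v))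
      (fun v hv => by simp only [hyoff v hv]; ring)]
    refine (Finset.sum_congr rfl fun j _ => ?_).symm
    rw [hyx i, hyx j]
    rcases adjMat_cases G'.coe i j with ⟨ha, he⟩ | ⟨ha, he⟩
    · rw [he, if_pos (show G'.Adj ↑i ↑j from ha)]
    · rw [he, if_neg (show ¬ G'.Adj ↑i ↑j from fun hadj => ha hadj)]
  rw [htrans] at hxquad
  have hnoW : ¬ G'.Adj z w → ∀ u v : Fin n, G'.Adj u v → u ≠ w ∧ v ≠ w := by
    intro hedge u v huv
    constructor
    · intro hu
      have hst := (hGadj u v).mp (G'.adj_sub huv)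
      rcases hst.2 with h1 | h1 | h1
      · exact hzw (hu ▸ h1.symm ▸ rfl)
      · exact hedge ((h1 ▸ hu ▸ huv).symm)
      · exact h1.1 hu
    · intro hv
      have hst := (hGadj u v).mp (G'.adj_sub huv)
      rcases hst.2 with h1 | h1 | h1
      · exact hedge (h1 ▸ hv ▸ huv)
      · exact hzw (hv ▸ h1.symm ▸ rfl)
      · exact h1.2 hv
  by_cases hedge : G'.Adj z w
  · -- Case B : the pendant edge is present, so some clique pair is missing
    obtain ⟨i, j, hij, hiw, hjw, hGij, hnij⟩ :
        ∃ i j : Fin n, i ≠ j ∧ i ≠ w ∧ j ≠ w ∧ (Gstar n).Adj i j ∧ ¬ G'.Adj i j := by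
      by_contra hcon
      push_neg at hcon
      apply hne
      have hzv : z ∈ G'.verts := G'.edge_vert hedge
      have hwv : w ∈ G'.verts := G'.edge_vert hedge.symm
      have hadjall : ∀ u v : Fin n, (Gstar n).Adj u v → G'.Adj u v := by
        intro u v hst
        rcases eq_or_ne u w with rfl | huw
        · have := (hGadj w v).mp hst
          rcases this.2 with h1 | h1 | h1
          · exact absurd h1.symm hzw
          · exact h1 ▸ hedge.symm
          · exact absurd rfl h1.1
        rcases eq_or_ne v w with rfl | hvw
        · have := (hGadj u w).mp hst
          rcases this.2 with h1 | h1 | h1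
          · exact h1 ▸ hedge
          · exact absurd h1.symm hzw
          · exact absurd rfl h1.2
        · exact hcon u v ((hGadj u v).mp hst).1 huw hvw hst
      have hverts : G'.verts = Set.univ := by
        apply Set.eq_univ_of_forall
        intro u
        rcases eq_or_ne u w with rfl | huw
        · exact hwv
        rcases eq_or_ne u z with rfl | huz
        · exact hzv
        · refine G'.edge_vert (hadjall u z ?_)
          exact (hGadj u z).mpr ⟨huz, Or.inr (Or.inl rfl)⟩
      apply SimpleGraph.Subgraph.ext
      · rw [hverts, SimpleGraph.Subgraph.verts_top]
      · ext u v
        rw [SimpleGraph.Subgraph.top_adj]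
        exact ⟨fun h => G'.adj_sub h, fun h => hadjall u v h⟩
    -- compare with Gstar quadratic form minus the missing pair
    have hstep : Q ≤ (∑ u, ∑ v, (if u ≠ v ∧ (u = z ∨ v = z ∨ (u ≠ w ∧ v ≠ w))
        then y u * y v else 0)) - 2 * (y i * y j) := by
      set d : Fin n → Fin n → ℝ := fun u v =>
        (if u ≠ v ∧ (u = z ∨ v = z ∨ (u ≠ w ∧ v ≠ w)) then y u * y v else 0)
        - (if G'.Adj u v then (1:ℝ) else 0) * (y u * y v) with hddef
      have hdnn : ∀ u v, 0 ≤ d u v := by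
        intro u v
        rw [hddef]; dsimp only
        by_cases h : G'.Adj u v
        · rw [if_pos h, if_pos ((hGadj u v).mp (G'.adj_sub h)), one_mul, sub_self]
        · rw [if_neg h, zero_mul, sub_zero]
          split
          · exact mul_nonneg (hynn u) (hynn v)
          · exact le_refl 0
      have hdij : d i j = y i * y j := by
        rw [hddef]; dsimp only
        rw [if_pos ((hGadj i j).mp hGij), if_neg hnij, zero_mul, sub_zero]
      have hdji : d j i = y j * y i := by
        rw [hddef]; dsimp only
        rw [if_pos ((hGadj j i).mp hGij.symm), if_neg (fun h => hnij h.symm), zero_mul, sub_zero]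
      have hpair : d i j + d j i ≤ ∑ p : Fin n × Fin n, d p.1 p.2 := by
        have hne' : ((i, j) : Fin n × Fin n) ≠ (j, i) := by
          intro h; exact hij (congrArg Prod.fst h)
        calc d i j + d j i = ∑ p ∈ ({(i,j), (j,i)} : Finset (Fin n × Fin n)), d p.1 p.2 := by
              rw [Finset.sum_pair hne']
        _ ≤ _ := Finset.sum_le_sum_of_subset_of_nonneg (Finset.subset_univ _)
              (fun p _ _ => hdnn p.1 p.2)
      have hsplit : ∑ p : Fin n × Fin n, d p.1 p.2
          = (∑ u, ∑ v, (if u ≠ v ∧ (u = z ∨ v = z ∨ (u ≠ w ∧ v ≠ w)) then y u * y v else 0))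
            - Q := by
        rw [Fintype.sum_prod_type]
        rw [hQdef, ← Finset.sum_sub_distrib]
        refine Finset.sum_congr rfl fun u _ => ?_
        rw [← Finset.sum_sub_distrib]
      rw [hdij, hdji] at hpair
      rw [hsplit] at hpair
      have : y j * y i = y i * y j := mul_comm _ _
      linarith
    have hlB := lemB hn w z i j hw hz hij hiw hjw y hynn hy0
    rw [hynorm, mul_one] at hlB
    constructor
    · linarith
    · intro heq; exfalso; linarith
  · -- Case A : no pendant edge; G' lives inside K_{n-1} ∪ K_1
    have hterm : ∀ u v : Fin n, (if G'.Adj u v then (1:ℝ) else 0) * (y u * y v)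
        ≤ (if u ≠ v ∧ u ≠ w ∧ v ≠ w then y u * y v else 0) := by
      intro u v
      by_cases h : G'.Adj u v
      · obtain ⟨huw, hvw⟩ := hnoW hedge u v h
        rw [if_pos h, one_mul, if_pos ⟨(G'.adj_sub h).ne, huw, hvw⟩]
      · rw [if_neg h, zero_mul]
        split
        · exact mul_nonneg (hynn u) (hynn v)
        · exact le_refl 0
    have hAbound : Q ≤ ∑ u, ∑ v, (if u ≠ v ∧ u ≠ w ∧ v ≠ w then y u * y v else 0) := by
      rw [hQdef]
      exact Finset.sum_le_sum fun u _ => Finset.sum_le_sum fun v _ => hterm u v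
    have hKbound := lemA_le hn w hw y
    rw [hynorm, mul_one] at hKbound
    constructor
    · linarith
    · -- equality analysis
      intro heq
      have hKeq : ∑ u, ∑ v, (if u ≠ v ∧ u ≠ w ∧ v ≠ w then y u * y v else 0)
          = ((n:ℝ) - 2) * ∑ u, (y u)^2 := by
        rw [hynorm, mul_one]; linarith
      obtain ⟨hflat, hw0⟩ := lemA_eq hn w hw y hKeq
      have hQK : Q = ∑ u, ∑ v, (if u ≠ v ∧ u ≠ w ∧ v ≠ w then y u * y v else 0) := by
        rw [hKeq, hynorm, mul_one]; linarith
      -- termwise equality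
      have hterm_eq : ∀ u v : Fin n, (if G'.Adj u v then (1:ℝ) else 0) * (y u * y v)
          = (if u ≠ v ∧ u ≠ w ∧ v ≠ w then y u * y v else 0) := by
        have hz1 : ∑ u, (∑ v, ((if u ≠ v ∧ u ≠ w ∧ v ≠ w then y u * y v else 0)
            - (if G'.Adj u v then (1:ℝ) else 0) * (y u * y v))) = 0 := by
          simp only [Finset.sum_sub_distrib]
          rw [← hQK, ← hQdef, sub_self]
        intro u v
        have h1 := (Finset.sum_eq_zero_iff_of_nonneg (fun u _ => Finset.sum_nonneg fun v _ =>
          sub_nonneg.mpr (hterm u v))).mp hz1 u (Finset.mem_univ u)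
        have h2 := (Finset.sum_eq_zero_iff_of_nonneg (fun v _ =>
          sub_nonneg.mpr (hterm u v))).mp h1 v (Finset.mem_univ v)
        linarith [h2]
      set c := y z with hcdef
      have hcpos : 0 < c := by
        rcases lt_or_eq_of_le (hynn z) with h | h
        · exact h
        · exfalso
          apply hy0
          funext u
          show y u = 0
          rcases eq_or_ne u w with rfl | huw
          · exact hw0
          · rw [hflat u z huw hzw]; exact h.symm
      have hyc : ∀ u : Fin n, u ≠ w → y u = c := fun u huw => hflat u z huw hzw
      have hclique : ∀ u v : Fin n, u ≠ v → u ≠ w → v ≠ w → G'.Adj u v := by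
        intro u v huv huw hvw
        have h2 := hterm_eq u v
        by_contra hnadj
        rw [if_neg hnadj, zero_mul] at h2
        rw [if_pos (show u ≠ v ∧ u ≠ w ∧ v ≠ w from ⟨huv, huw, hvw⟩),
          hyc u huw, hyc v hvw] at h2
        nlinarith
      have hone : (⟨1, by omega⟩ : Fin n) ≠ w := by
        intro h
        have : (1:ℕ) = n - 1 := by
          have := congrArg Fin.val h; simpa [hw] using this
        omega
      have honez : (⟨1, by omega⟩ : Fin n) ≠ z := by
        intro h
        have : (1:ℕ) = 0 := by
          have := congrArg Fin.val h; simpa [hz] using this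
        omega
      have hmem : ∀ u : Fin n, u ≠ w → u ∈ G'.verts := by
        intro u huw
        rcases eq_or_ne u z with rfl | huz
        · exact G'.edge_vert (hclique z ⟨1, by omega⟩ (Ne.symm honez) hzw hone)
        · exact G'.edge_vert (hclique u z huz huw hzw)
      have hnWedge : ∀ u v : Fin n, G'.Adj u v → u ≠ w ∧ v ≠ w := hnoW hedge
      by_cases hwin : w ∈ G'.verts
      · right
        have hVuniv : G'.verts = Set.univ :=
          Set.eq_univ_of_forall fun u => by
            rcases eq_or_ne u w with rfl | huw
            · exact hwin
            · exact hmem u huw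
        refine ⟨⟨(Equiv.setCongr hVuniv).trans (Equiv.Set.univ _), ?_⟩⟩
        intro a b
        show ((↑a : Fin n) ≠ ↑b ∧ (↑a : Fin n).val ≠ n - 1 ∧ (↑b : Fin n).val ≠ n - 1)
          ↔ G'.Adj ↑a ↑b
        constructor
        · rintro ⟨h1, h2, h3⟩
          refine hclique _ _ h1 ?_ ?_
          · intro h; exact h2 (by rw [h, hw])
          · intro h; exact h3 (by rw [h, hw])
        · intro h
          obtain ⟨h2, h3⟩ := hnWedge _ _ h
          refine ⟨(G'.adj_sub h).ne, ?_, ?_⟩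
          · intro hval; exact h2 (Fin.ext (by rw [hval, hw]))
          · intro hval; exact h3 (Fin.ext (by rw [hval, hw]))
      · left
        have hVC : ∀ u : Fin n, u ∈ G'.verts ↔ u ≠ w := by
          intro u
          constructor
          · intro hu h; exact hwin (h ▸ hu)
          · exact hmem u
        have hlt : ∀ a : ↥G'.verts, (↑a : Fin n).val < n - 1 := by
          intro a
          have h1 := (hVC ↑a).mp a.2
          have h2 : (↑a : Fin n).val ≠ n - 1 := fun hval => h1 (Fin.ext (by rw [hval, hw]))
          have := (↑a : Fin n).isLt
          omega
        refine ⟨⟨⟨fun a => ⟨(↑a : Fin n).val, hlt a⟩,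
          fun k => ⟨⟨k.val, by omega⟩, (hVC _).mpr (by
            intro h
            have := congrArg Fin.val h
            simp only [hw] at this
            have := k.isLt
            omega)⟩, ?_, ?_⟩, ?_⟩⟩
        · intro a; apply Subtype.ext; apply Fin.ext; rfl
        · intro k; apply Fin.ext; rfl
        · intro a b
          show ((⟨(↑a : Fin n).val, hlt a⟩ : Fin (n-1)) ≠ ⟨(↑b : Fin n).val, hlt b⟩)
            ↔ G'.Adj ↑a ↑b
          constructor
          · intro h
            exact hclique _ _ (fun hab => h (Fin.ext (show ((↑a : Fin n)).val = ((↑b : Fin n)).val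
              from congrArg Fin.val hab))) ((hVC _).mp a.2) ((hVC _).mp b.2)
          · intro h hab
            have h2 := congrArg Fin.val hab
            exact (G'.adj_sub h).ne (Fin.ext h2)
end

section
/- The graph K_1 ∨ (K_{n-2} ∪ K_1) (n ≥ 4) is not Hamiltonian, is connected, and has spectral radius strictly greater than n − 2. -/
open SimpleGraph

open Matrix RealInnerProductSpace

lemma rayleigh_le {n : ℕ} {A : Matrix (Fin n) (Fin n) ℝ} (hA : A.IsHermitian) (x : Fin n → ℝ) :
    x ⬝ᵥ (A *ᵥ x) ≤ (⨆ i, hA.eigenvalues i) * (x ⬝ᵥ x) := by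
  set B := hA.eigenvectorBasis
  set xE : EuclideanSpace ℝ (Fin n) := WithLp.toLp 2 x with hxE
  set c : Fin n → ℝ := fun i => B.repr xE i with hc
  have hdot : ∀ y z : EuclideanSpace ℝ (Fin n), ⟪y, z⟫ = (y : Fin n → ℝ) ⬝ᵥ z := by
    intro y z; simp [dotProduct, PiLp.inner_apply, mul_comm]
  have hx : ∑ i, c i • (B i : EuclideanSpace ℝ (Fin n)) = xE := B.sum_repr xE
  have hAx : A *ᵥ x = ∑ i, c i • (hA.eigenvalues i • (B i : Fin n → ℝ)) := by
    have h2 : A.mulVecLin xE = A.mulVecLin (∑ i, c i • (B i : EuclideanSpace ℝ (Fin n))) := by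
      rw [← hx, WithLp.ofLp_sum]; simp only [WithLp.ofLp_smul]
    rw [show A *ᵥ x = A.mulVecLin xE from rfl, h2, map_sum]
    refine Finset.sum_congr rfl fun i _ => ?_
    show A *ᵥ (c i • (B i : Fin n → ℝ)) = _
    rw [Matrix.mulVec_smul]
    exact congrArg (c i • ·) (hA.mulVec_eigenvectorBasis i)
  have hsum : ∀ (w : Fin n → Fin n → ℝ), x ⬝ᵥ (∑ i, w i) = ∑ i, x ⬝ᵥ w i := by
    intro w
    simp only [dotProduct, Finset.sum_apply, Finset.mul_sum]
    exact Finset.sum_comm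
  have hquad : x ⬝ᵥ (A *ᵥ x) = ∑ i, hA.eigenvalues i * (c i)^2 := by
    rw [hAx]
    rw [show (∑ i, c i • (hA.eigenvalues i • (B i : Fin n → ℝ)))
        = ∑ i, (fun i => c i • (hA.eigenvalues i • (B i : Fin n → ℝ))) i from rfl, hsum]
    refine Finset.sum_congr rfl fun i _ => ?_
    rw [dotProduct_smul, dotProduct_smul, ← hdot xE (B i)]
    have h3 : ⟪xE, (B i : EuclideanSpace ℝ (Fin n))⟫ = c i := by
      rw [real_inner_comm]; exact (B.repr_apply_apply xE i).symm
    rw [h3]; ring_nf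
  have hnorm : x ⬝ᵥ x = ∑ i, (c i)^2 := by
    calc x ⬝ᵥ x = ⟪xE, xE⟫ := (hdot xE xE).symm
    _ = ⟪B.repr xE, B.repr xE⟫ := (B.repr.inner_map_map xE xE).symm
    _ = (B.repr xE : Fin n → ℝ) ⬝ᵥ B.repr xE := hdot _ _
    _ = ∑ i, (c i)^2 := by simp [dotProduct, sq, hc]
  rw [hquad, hnorm, Finset.mul_sum]
  refine Finset.sum_le_sum fun i _ => ?_
  have hle : hA.eigenvalues i ≤ ⨆ j, hA.eigenvalues j :=
    le_ciSup (Set.Finite.bddAbove (Set.finite_range _)) i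
  exact mul_le_mul_of_nonneg_right hle (sq_nonneg _)

lemma sum_split{n : ℕ} (a b : Fin n) (hab : a ≠ b) (f : Fin n → ℝ) (C : ℝ)
    (h : ∀ v, v ≠ a → v ≠ b → f v = C) :
    ∑ v, f v = f a + f b + ((n : ℝ) - 2) * C := by
  classical
  have hn2 : 2 ≤ n := by
    have : 1 < Fintype.card (Fin n) := Fintype.one_lt_card_iff_nontrivial.mpr ⟨⟨a, b, hab⟩⟩
    simp at this; omega
  have ha : a ∈ Finset.univ := Finset.mem_univ a
  have hb : b ∈ Finset.univ.erase a := Finset.mem_erase.2 ⟨hab.symm, Finset.mem_univ b⟩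
  rw [← Finset.add_sum_erase _ f ha, ← Finset.add_sum_erase _ f hb]
  have hconst : ∀ v ∈ (Finset.univ.erase a).erase b, f v = C := by
    intro v hv
    rw [Finset.mem_erase, Finset.mem_erase] at hv
    exact h v hv.2.1 hv.1
  rw [Finset.sum_congr rfl hconst, Finset.sum_const]
  have hcard : ((Finset.univ.erase a).erase b).card = n - 2 := by
    rw [Finset.card_erase_of_mem hb, Finset.card_erase_of_mem ha, Finset.card_univ,
      Fintype.card_fin]
    omega
  rw [hcard, nsmul_eq_mul]
  have : ((n - 2 : ℕ) : ℝ) = (n : ℝ) - 2 := by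
    push_cast [Nat.cast_sub hn2]; ring
  rw [this]; ring

/-- `K_1 ∨ (K_{n-2} ∪ K_1)` is not Hamiltonian, is connected, and has spectral
radius strictly greater than `n - 2`. -/
theorem Gstar_properties {n : ℕ} (hn : 4 ≤ n) :
    ¬ (Gstar n).IsHamiltonian ∧ (Gstar n).Connected ∧
      (n : ℝ) - 2 < specRad (Gstar n) := by
  classical
  refine ⟨?_, ?_, ?_⟩
  · intro hham
    set z : Fin n := ⟨0, by omega⟩ with hzdef
    set e : Fin n := ⟨n - 1, by omega⟩ with hedef
    have hadj_e : ∀ u : Fin n, (Gstar n).Adj e u → u = z := by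
      rintro u ⟨hne, h1 | h1 | h1⟩
      · exfalso; simp only [hedef] at h1; omega
      · exact Fin.ext h1
      · exact absurd rfl h1.1
    have hcard : Fintype.card (Fin n) ≠ 1 := by simp; omega
    obtain ⟨a, p, hp⟩ := hham hcard
    have hv : e ∈ p.support := hp.mem_support e
    set c := p.rotate e hv with hcdef
    have hc : c.IsCycle := hp.isCycle.rotate hv
    have hcn : ¬ c.Nil := hc.not_nil
    have hlen : 3 ≤ c.length := hc.three_le_length
    have hadj1 := c.adj_snd hcn
    have hw : c.getVert 1 = z := hadj_e _ hadj1
    have hc2 : (Walk.cons (c.adj_snd hcn) c.tail).IsCycle := by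
      rw [Walk.cons_tail_eq c hcn]; exact hc
    rw [Walk.cons_isCycle_iff] at hc2
    obtain ⟨hq, hne⟩ := hc2
    have hqlen : c.tail.length + 1 = c.length := Walk.length_tail_add_one hcn
    set r := c.tail.reverse with hrdef
    have hrn : ¬ r.Nil := by
      rw [Walk.not_nil_iff_lt_length, hrdef, Walk.length_reverse]; omega
    have hadj2 := r.adj_snd hrn
    have hu : r.getVert 1 = z := hadj_e _ hadj2
    have hredges : r.edges = s(e, r.getVert 1) :: r.tail.edges := by
      conv_lhs => rw [← Walk.cons_tail_eq r hrn]
      rw [Walk.edges_cons]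
    have hmem : s(e, z) ∈ r.edges := by
      rw [hredges, ← hu]; exact List.mem_cons_self
    have hmem' : s(e, z) ∈ c.tail.reverse.edges := hmem
    rw [Walk.edges_reverse, List.mem_reverse] at hmem'
    have heq : s(e, c.getVert 1) = s(e, z) := by rw [hw]
    exact hne (by rw [heq]; exact hmem')
  · rw [SimpleGraph.connected_iff_exists_forall_reachable]
    refine ⟨⟨0, by omega⟩, fun w => ?_⟩
    by_cases h : w = ⟨0, by omega⟩
    · rw [h]
    · have hadj : (Gstar n).Adj ⟨0, by omega⟩ w := ⟨fun hh => h hh.symm, Or.inl rfl⟩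
      exact hadj.reachable
  · classical
    set z : Fin n := ⟨0, by omega⟩ with hzdef
    set e : Fin n := ⟨n - 1, by omega⟩ with hedef
    have hze : z ≠ e := by
      intro h
      have := congrArg Fin.val h
      simp only [hzdef, hedef] at this
      omega
    -- adjacency facts
    have hval_ne : ∀ v : Fin n, v ≠ e → v.val ≠ n - 1 := by
      intro v hv h
      exact hv (Fin.ext h)
    have haze : (Gstar n).Adj z e := ⟨hze, Or.inl rfl⟩
    have hadj_e : ∀ u : Fin n, (Gstar n).Adj e u → u = z := by
      rintro u ⟨hne, h1 | h1 | h1⟩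
      · exfalso; simp only [hedef] at h1; omega
      · exact Fin.ext h1
      · exact absurd rfl h1.1
    have hadj_z : ∀ v : Fin n, v ≠ z → (Gstar n).Adj z v := fun v hv => ⟨hv.symm, Or.inl rfl⟩
    have hmid : ∀ u v : Fin n, u ≠ v → u ≠ e → v ≠ e → (Gstar n).Adj u v :=
      fun u v h1 h2 h3 => ⟨h1, Or.inr (Or.inr ⟨hval_ne u h2, hval_ne v h3⟩)⟩
    -- test vector
    set x : Fin n → ℝ := fun v => if v = e then 1 / (n : ℝ) else 1 with hxdef
    have hxz : x z = 1 := by simp [hxdef, hze]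
    have hxe : x e = 1 / n := by simp [hxdef]
    have hxmid : ∀ v : Fin n, v ≠ e → x v = 1 := by intro v hv; simp [hxdef, hv]
    set A := adjMat (Gstar n) with hAdef
    have hentry : ∀ i j, A i j = if (Gstar n).Adj i j then 1 else 0 := by
      intro i j
      simp [hAdef, adjMat, SimpleGraph.adjMatrix]
    have hmv : ∀ i, (A *ᵥ x) i = ∑ j, (if (Gstar n).Adj i j then x j else 0) := by
      intro i
      simp only [Matrix.mulVec, dotProduct]
      refine Finset.sum_congr rfl fun j _ => ?_
      rw [hentry i j]
      split <;> simp
    set y := A *ᵥ x with hydef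
    have hn' : (4 : ℝ) ≤ (n : ℝ) := by exact_mod_cast hn
    have hnpos : (0 : ℝ) < n := by linarith
    -- y at z
    have hyz : y z = ((n : ℝ) - 2) + 1 / n := by
      rw [hmv z, sum_split z e hze _ 1
        (fun v hvz hve => by rw [if_pos (hadj_z v hvz), hxmid v hve]),
        if_neg ((Gstar n).irrefl), if_pos haze, hxe]
      ring
    have hye : y e = 1 := by
      rw [hmv e, sum_split e z hze.symm _ 0 (fun v hve hvz => by
        rw [if_neg (fun h => hvz (hadj_e v h))]),
        if_neg ((Gstar n).irrefl), if_pos haze.symm, hxz]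
      ring
    have hymid : ∀ v : Fin n, v ≠ z → v ≠ e → y v = (n : ℝ) - 2 := by
      intro v hvz hve
      rw [hmv v, sum_split v e hve _ 1 (fun u huv hue => by
        rw [if_pos (hmid v u (fun h => huv h.symm) hve hue), hxmid u hue]),
        if_neg ((Gstar n).irrefl),
        if_neg (fun h => hvz (hadj_e v h.symm))]
      ring
    have hQ : x ⬝ᵥ y = ((n : ℝ) - 2) + 2 / n + ((n : ℝ) - 2) * ((n : ℝ) - 2) := by
      show ∑ v, x v * y v = _
      rw [sum_split z e hze _ ((n : ℝ) - 2) (fun v hvz hve => by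
        rw [hxmid v hve, hymid v hvz hve, one_mul]),
        hxz, hxe, hyz, hye]
      ring
    have hN : x ⬝ᵥ x = 1 + 1 / ((n : ℝ) * n) + ((n : ℝ) - 2) := by
      show ∑ v, x v * x v = _
      rw [sum_split z e hze _ 1 (fun v hvz hve => by rw [hxmid v hve, one_mul]),
        hxz, hxe]
      field_simp
    have hNpos : 0 < x ⬝ᵥ x := by
      rw [hN]
      have : 0 < 1 / ((n:ℝ) * n) := by positivity
      linarith
    have hray := rayleigh_le (adjMat_isHermitian (Gstar n)) x
    have hlt : ((n : ℝ) - 2) * (x ⬝ᵥ x) < x ⬝ᵥ y := by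
      rw [hN, hQ]
      have h1 : ((n:ℝ) - 2) / ((n:ℝ) * n) < 2 / n := by
        rw [div_lt_div_iff₀ (by positivity) hnpos]
        nlinarith
      have h2 : ((n:ℝ) - 2) * (1 / ((n:ℝ)*n)) = ((n:ℝ)-2)/((n:ℝ)*n) := by ring
      nlinarith [h1]
    have : ((n : ℝ) - 2) * (x ⬝ᵥ x) < (⨆ i, (adjMat_isHermitian (Gstar n)).eigenvalues i) * (x ⬝ᵥ x) := by
      calc ((n : ℝ) - 2) * (x ⬝ᵥ x) < x ⬝ᵥ y := hlt
      _ = x ⬝ᵥ (A *ᵥ x) := by rw [hydef]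
      _ ≤ _ := hray
    have hfin := lt_of_mul_lt_mul_right this hNpos.le
    exact hfin
end

section
/- The graph K_2 ∨ 3K_1 on 5 vertices is not Hamiltonian, has exactly 7 edges, and has adjacency spectral radius equal to 3. -/
open SimpleGraph

/- ===== auxiliary lemmas ===== -/

instance : DecidableRel K2join3K1.Adj := fun _ _ => instDecidableAnd

set_option maxRecDepth 10000 in
lemma noHamAux : ∀ a b c d e : Fin 5, ¬([a,b,c,d,e].Nodup ∧ K2join3K1.Adj a b ∧
    K2join3K1.Adj b c ∧ K2join3K1.Adj c d ∧ K2join3K1.Adj d e ∧ K2join3K1.Adj e a) := by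
  decide

lemma K2_not_hamiltonian : ¬ K2join3K1.IsHamiltonian := by
  intro h
  obtain ⟨a, p, hp⟩ := h (by simp)
  have hlen : p.length = 5 := by simpa using hp.length_eq
  have h6 : p.support.length = 6 := by rw [Walk.length_support, hlen]
  have hchain := p.isChain_adj_support
  have hnd := hp.isCycle.support_nodup
  have hhead : p.support.head? = some a := by
    rw [List.head?_eq_head (by simp), p.head_support]
  have hlast : p.support.getLast? = some a := by
    rw [List.getLast?_eq_getLast (by simp), p.getLast_support]
  obtain ⟨x0, x1, x2, x3, x4, x5, hs⟩ :
      ∃ x0 x1 x2 x3 x4 x5, p.support = [x0, x1, x2, x3, x4, x5] := by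
    rcases e : p.support with _ | ⟨y0, _ | ⟨y1, _ | ⟨y2, _ | ⟨y3, _ | ⟨y4, _ | ⟨y5, _ | ⟨y6, t⟩⟩⟩⟩⟩⟩⟩ <;>
      rw [e] at h6 <;> simp at h6 <;> exact ⟨_, _, _, _, _, _, rfl⟩
  rw [hs] at hchain hnd hhead hlast
  simp only [List.isChain_cons_cons, List.isChain_singleton, and_true] at hchain
  simp at hhead
  simp [List.getLast] at hlast
  refine noHamAux x1 x2 x3 x4 x5 ⟨by simpa using hnd, hchain.2.1, hchain.2.2.1,
    hchain.2.2.2.1, hchain.2.2.2.2, ?_⟩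
  rw [hlast, ← hhead]
  exact hchain.1

lemma K2_edges : K2join3K1.edgeSet.ncard = 7 := by
  rw [Set.ncard_eq_toFinset_card']
  rfl

/-- The concrete adjacency matrix. -/
noncomputable def MatK : Matrix (Fin 5) (Fin 5) ℝ :=
  !![0,1,1,1,1;1,0,1,1,1;1,1,0,0,0;1,1,0,0,0;1,1,0,0,0]

lemma adjMat_eq : adjMat K2join3K1 = MatK := by
  letI := Classical.decRel K2join3K1.Adj
  ext i j
  fin_cases i <;> fin_cases j <;>
    norm_num [adjMat, MatK, K2join3K1, Matrix.vecHead, Matrix.vecTail, Fin.ext_iff]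

set_option maxHeartbeats 2000000 in
lemma detMatK (μ : ℝ) : Matrix.det (μ • (1 : Matrix (Fin 5) (Fin 5) ℝ) - MatK) =
    μ^2*(μ-3)*(μ+1)*(μ+2) := by
  have h : μ • (1 : Matrix (Fin 5) (Fin 5) ℝ) - MatK =
      !![μ,-1,-1,-1,-1;-1,μ,-1,-1,-1;-1,-1,μ,0,0;-1,-1,0,μ,0;-1,-1,0,0,μ] := by
    ext i j
    fin_cases i <;> fin_cases j <;>
      norm_num [MatK, Matrix.one_apply, Matrix.vecHead, Matrix.vecTail, Fin.ext_iff]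
  rw [h]
  simp (config := {decide := true}) [Matrix.det_succ_row_zero, Fin.sum_univ_succ, Fin.succAbove]
  ring

set_option maxRecDepth 8000 in
lemma eig_root (i : Fin 5) :
    (adjMat_isHermitian K2join3K1).eigenvalues i = 3 ∨
    (adjMat_isHermitian K2join3K1).eigenvalues i = 0 ∨
    (adjMat_isHermitian K2join3K1).eigenvalues i = -1 ∨
    (adjMat_isHermitian K2join3K1).eigenvalues i = -2 := by
  set μ := (adjMat_isHermitian K2join3K1).eigenvalues i with hμ
  have hmem := (adjMat_isHermitian K2join3K1).eigenvalues_mem_spectrum_real i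
  rw [spectrum.mem_iff, Algebra.algebraMap_eq_smul_one] at hmem
  have hdet0 : Matrix.det (μ • (1 : Matrix (Fin 5) (Fin 5) ℝ) - adjMat K2join3K1) = 0 := by
    by_contra hne
    exact hmem ((Matrix.isUnit_iff_isUnit_det _).2 (isUnit_iff_ne_zero.2 hne))
  rw [adjMat_eq, detMatK] at hdet0
  rcases mul_eq_zero.1 hdet0 with h | h
  · rcases mul_eq_zero.1 h with h | h
    · rcases mul_eq_zero.1 h with h | h
      · right; left; exact pow_eq_zero_iff (by norm_num) |>.1 h
      · left; linarith
    · right; right; left; linarith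
  · right; right; right; linarith

lemma eig_sum : ∑ i, (adjMat_isHermitian K2join3K1).eigenvalues i = 0 := by
  have hA := adjMat_isHermitian K2join3K1
  have htr : Matrix.trace (adjMat K2join3K1) = 0 := by
    rw [adjMat_eq]
    norm_num [Matrix.trace, MatK, Fin.sum_univ_succ, Matrix.vecHead, Matrix.vecTail]
  calc ∑ i, (adjMat_isHermitian K2join3K1).eigenvalues i
      = Matrix.trace (Matrix.diagonal (RCLike.ofReal ∘
          (adjMat_isHermitian K2join3K1).eigenvalues) : Matrix (Fin 5) (Fin 5) ℝ) := by
        simp [Matrix.trace_diagonal]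
    _ = Matrix.trace (adjMat K2join3K1) := by
        conv_rhs => rw [(adjMat_isHermitian K2join3K1).spectral_theorem]
        rw [Unitary.conjStarAlgAut_apply, Matrix.trace_mul_cycle]
        rw [show (star ((adjMat_isHermitian K2join3K1).eigenvectorUnitary :
            Matrix (Fin 5) (Fin 5) ℝ)) * ((adjMat_isHermitian K2join3K1).eigenvectorUnitary :
            Matrix (Fin 5) (Fin 5) ℝ) = 1 from
          Unitary.coe_star_mul_self _, Matrix.one_mul]
    _ = 0 := htr

lemma eig_exists_three : ∃ i, (adjMat_isHermitian K2join3K1).eigenvalues i = 3 := by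
  by_contra hno
  push_neg at hno
  have hle0 : ∀ i ∈ Finset.univ, (adjMat_isHermitian K2join3K1).eigenvalues i ≤ 0 := by
    intro i _
    rcases eig_root i with h | h | h | h
    · exact absurd h (hno i)
    all_goals linarith [h]
  have hall0 := (Finset.sum_eq_zero_iff_of_nonpos hle0).1 eig_sum
  have hzero : adjMat K2join3K1 = 0 := by
    rw [(adjMat_isHermitian K2join3K1).spectral_theorem]
    have h0 : (RCLike.ofReal ∘ (adjMat_isHermitian K2join3K1).eigenvalues : Fin 5 → ℝ) = fun _ => 0 := by
      funext i
      simp [hall0 i (Finset.mem_univ i)]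
    rw [h0, Matrix.diagonal_zero, Unitary.conjStarAlgAut_apply, Matrix.mul_zero, Matrix.zero_mul]
  rw [adjMat_eq] at hzero
  have := congrFun (congrFun hzero 0) 1
  norm_num [MatK] at this

lemma K2_specRad : specRad K2join3K1 = 3 := by
  unfold specRad
  apply le_antisymm
  · apply ciSup_le
    intro i
    rcases eig_root i with h | h | h | h <;> rw [h] <;> norm_num
  · obtain ⟨i, hi⟩ := eig_exists_three
    rw [← hi]
    exact le_ciSup (Set.Finite.bddAbove (Set.finite_range _)) i

/-- `K_2 ∨ 3K_1` is not Hamiltonian, has exactly `7` edges, and spectral radius `3`. -/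
theorem K2join3K1_properties :
    ¬ K2join3K1.IsHamiltonian ∧ K2join3K1.edgeSet.ncard = 7 ∧
      specRad K2join3K1 = 3 :=
  ⟨K2_not_hamiltonian, K2_edges, K2_specRad⟩
end

section
/- Let n ≥ 5, let G^* = K_1 ∨ (K_{n-2} ∪ K_1), and let G be the graph obtained from G^* by deleting one edge of the K_{n-2} that is not incident with the dominating vertex. Then G admits an equitable partition into four parts whose quotient matrix is Q = [[0,1,0,0],[1,0,2,n−4],[0,1,0,n−4],[0,1,2,n−5]], and ρ(G) < n − 2. -/
open SimpleGraph

open Matrix in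
set_option maxHeartbeats 1000000 in
lemma key_ineq (m u v y z W R : ℝ) (hm : 1 ≤ m) (hCS : W ^ 2 ≤ m * R)
    (hpos : 0 < u ^ 2 + v ^ 2 + y ^ 2 + z ^ 2 + R) :
    (u + v + y + z + W) ^ 2 <
      (m + 3) * (u ^ 2 + v ^ 2 + y ^ 2 + z ^ 2 + R) + 2 * v * (y + z + W) + 2 * y * z := by
  have hm0 : (0 : ℝ) < m := by linarith
  have c1 : (0 : ℝ) < m + 1 := by linarith
  have c2 : (0 : ℝ) < m + 2 := by linarith
  have c3 : (0 : ℝ) < m + 3 := by linarith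
  have c4 : (0 : ℝ) < m ^ 2 + 4 * m + 2 := by positivity
  have c5 : (0 : ℝ) < m ^ 2 + 4 * m + 1 := by positivity
  have c6 : (0 : ℝ) < 2 * m ^ 2 + 9 * m + 6 := by positivity
  have c7 : (0 : ℝ) < m ^ 2 + 5 * m + 5 := by positivity
  rw [← sub_pos]
  set E := (m + 3) * (u ^ 2 + v ^ 2 + y ^ 2 + z ^ 2 + R) + 2 * v * (y + z + W) + 2 * y * z -
      (u + v + y + z + W) ^ 2 with hE
  set f := m * (m + 3) * (u ^ 2 + v ^ 2 + y ^ 2 + z ^ 2) + (m + 3) * W ^ 2 +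
      2 * m * v * (y + z + W) + 2 * m * y * z - m * (u + v + y + z + W) ^ 2 with hfdef
  have hc : (0 : ℝ) < (m + 2) * (m + 1) * (m + 3) * (m ^ 2 + 4 * m + 2) * (m ^ 2 + 4 * m + 1) := by
    positivity
  set A1 := (m + 2) * v - u with hA1
  set A2 := (m + 1) * (m + 3) * u - (m + 2) * (y + z + W) with hA2
  set A3 := (m + 2) * (m ^ 2 + 4 * m + 2) * y - (m + 2) * z - (m ^ 2 + 5 * m + 5) * W with hA3
  set A4 := (m + 2) * (m ^ 2 + 4 * m + 1) * z - (m ^ 2 + 5 * m + 5) * W with hA4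
  have hid : (m + 2) * (m + 1) * (m + 3) * (m ^ 2 + 4 * m + 2) * (m ^ 2 + 4 * m + 1) * f =
      m * (m + 1) * (m + 3) * (m ^ 2 + 4 * m + 2) * (m ^ 2 + 4 * m + 1) * A1 ^ 2 +
      m * (m ^ 2 + 4 * m + 2) * (m ^ 2 + 4 * m + 1) * A2 ^ 2 +
      m * (m ^ 2 + 4 * m + 1) * A3 ^ 2 +
      m * (m + 1) * (m + 3) * A4 ^ 2 +
      (m + 1) * (m + 3) * (m ^ 2 + 4 * m + 2) * (2 * m ^ 2 + 9 * m + 6) * W ^ 2 := by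
    rw [hfdef, hA1, hA2, hA3, hA4]; ring
  have hq1 : (0 : ℝ) < m * (m + 1) * (m + 3) * (m ^ 2 + 4 * m + 2) * (m ^ 2 + 4 * m + 1) := by
    positivity
  have hq2 : (0 : ℝ) < m * (m ^ 2 + 4 * m + 2) * (m ^ 2 + 4 * m + 1) := by positivity
  have hq3 : (0 : ℝ) < m * (m ^ 2 + 4 * m + 1) := by positivity
  have hq4 : (0 : ℝ) < m * (m + 1) * (m + 3) := by positivity
  have hq5 : (0 : ℝ) < (m + 1) * (m + 3) * (m ^ 2 + 4 * m + 2) * (2 * m ^ 2 + 9 * m + 6) := by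
    positivity
  have hslack : (0 : ℝ) ≤ (m + 3) * (m * R - W ^ 2) := by nlinarith
  have hmE : m * E = f + (m + 3) * (m * R - W ^ 2) := by rw [hE, hfdef]; ring
  have hEpos : 0 < m * E := by
    by_cases h5 : u = 0 ∧ v = 0 ∧ y = 0 ∧ z = 0 ∧ W = 0
    · obtain ⟨hu, hv, hy, hz, hW⟩ := h5
      have hR : 0 < R := by nlinarith [sq_nonneg u, sq_nonneg v, sq_nonneg y, sq_nonneg z]
      rw [hmE, hfdef, hu, hv, hy, hz, hW]
      nlinarith
    · have n1 : (0:ℝ) ≤ m * (m + 1) * (m + 3) * (m ^ 2 + 4 * m + 2) * (m ^ 2 + 4 * m + 1) * A1 ^ 2 :=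
        mul_nonneg hq1.le (sq_nonneg _)
      have n2 : (0:ℝ) ≤ m * (m ^ 2 + 4 * m + 2) * (m ^ 2 + 4 * m + 1) * A2 ^ 2 :=
        mul_nonneg hq2.le (sq_nonneg _)
      have n3 : (0:ℝ) ≤ m * (m ^ 2 + 4 * m + 1) * A3 ^ 2 := mul_nonneg hq3.le (sq_nonneg _)
      have n4 : (0:ℝ) ≤ m * (m + 1) * (m + 3) * A4 ^ 2 := mul_nonneg hq4.le (sq_nonneg _)
      have n5 : (0:ℝ) ≤ (m + 1) * (m + 3) * (m ^ 2 + 4 * m + 2) * (2 * m ^ 2 + 9 * m + 6) * W ^ 2 :=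
        mul_nonneg hq5.le (sq_nonneg _)
      have hcf : 0 < (m + 2) * (m + 1) * (m + 3) * (m ^ 2 + 4 * m + 2) * (m ^ 2 + 4 * m + 1) * f := by
        by_cases hW : W = 0
        · by_cases hz : z = 0
          · by_cases hy : y = 0
            · by_cases hu : u = 0
              · have hv : v ≠ 0 := by tauto
                have hA1v : A1 ≠ 0 := by
                  rw [hA1, hu]
                  intro h
                  have : (m + 2) * v = 0 := by linarith
                  rcases mul_eq_zero.mp this with h' | h'
                  · linarith
                  · exact hv h'
                have p1 : 0 < m * (m + 1) * (m + 3) * (m ^ 2 + 4 * m + 2) * (m ^ 2 + 4 * m + 1) * A1 ^ 2 :=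
                  mul_pos hq1 ((sq_nonneg A1).lt_of_ne' (pow_ne_zero 2 hA1v))
                rw [hid]
                exact add_pos_of_pos_of_nonneg (add_pos_of_pos_of_nonneg
                  (add_pos_of_pos_of_nonneg (add_pos_of_pos_of_nonneg p1 n2) n3) n4) n5
              · have hA2v : A2 ≠ 0 := by
                  rw [hA2, hy, hz, hW]
                  intro h
                  have : (m + 1) * (m + 3) * u = 0 := by linarith
                  rcases mul_eq_zero.mp this with h' | h'
                  · rcases mul_eq_zero.mp h' with h'' | h'' <;> linarith
                  · exact hu h'
                have p2 : 0 < m * (m ^ 2 + 4 * m + 2) * (m ^ 2 + 4 * m + 1) * A2 ^ 2 :=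
                  mul_pos hq2 ((sq_nonneg A2).lt_of_ne' (pow_ne_zero 2 hA2v))
                rw [hid]
                exact add_pos_of_pos_of_nonneg (add_pos_of_pos_of_nonneg
                  (add_pos_of_pos_of_nonneg (add_pos_of_nonneg_of_pos n1 p2) n3) n4) n5
            · have hA3v : A3 ≠ 0 := by
                rw [hA3, hz, hW]
                intro h
                have : (m + 2) * (m ^ 2 + 4 * m + 2) * y = 0 := by linarith
                rcases mul_eq_zero.mp this with h' | h'
                · rcases mul_eq_zero.mp h' with h'' | h'' <;> linarith
                · exact hy h'
              have p3 : 0 < m * (m ^ 2 + 4 * m + 1) * A3 ^ 2 :=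
                mul_pos hq3 ((sq_nonneg A3).lt_of_ne' (pow_ne_zero 2 hA3v))
              rw [hid]
              exact add_pos_of_pos_of_nonneg (add_pos_of_pos_of_nonneg
                (add_pos_of_nonneg_of_pos (add_nonneg n1 n2) p3) n4) n5
          · have hA4v : A4 ≠ 0 := by
              rw [hA4, hW]
              intro h
              have : (m + 2) * (m ^ 2 + 4 * m + 1) * z = 0 := by linarith
              rcases mul_eq_zero.mp this with h' | h'
              · rcases mul_eq_zero.mp h' with h'' | h'' <;> linarith
              · exact hz h'
            have p4 : 0 < m * (m + 1) * (m + 3) * A4 ^ 2 :=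
              mul_pos hq4 ((sq_nonneg A4).lt_of_ne' (pow_ne_zero 2 hA4v))
            rw [hid]
            exact add_pos_of_pos_of_nonneg
              (add_pos_of_nonneg_of_pos (add_nonneg (add_nonneg n1 n2) n3) p4) n5
        · have p5 : 0 < (m + 1) * (m + 3) * (m ^ 2 + 4 * m + 2) * (2 * m ^ 2 + 9 * m + 6) * W ^ 2 :=
            mul_pos hq5 ((sq_nonneg W).lt_of_ne' (pow_ne_zero 2 hW))
          rw [hid]
          exact add_pos_of_nonneg_of_pos (add_nonneg (add_nonneg (add_nonneg n1 n2) n3) n4) p5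
      have hf : 0 < f := pos_of_mul_pos_right hcf hc.le
      rw [hmE]; linarith
  have : 0 < m * E := hEpos
  exact pos_of_mul_pos_right this hm0.le

set_option maxHeartbeats 1000000 in
lemma aux_partition {n : ℕ} (hn : 5 ≤ n) (a b : Fin n) (hab : a ≠ b)
    (ha0 : a.val ≠ 0) (hb0 : b.val ≠ 0) (ha : a.val ≠ n - 1) (hb : b.val ≠ n - 1) :
    (∃ p : Fin n → Fin 4, Function.Surjective p ∧
      ∀ (i j : Fin 4) (v : Fin n), p v = i →
        {w : Fin n | p w = j ∧ ((Gstar n).deleteEdges {s(a, b)}).Adj v w}.ncard =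
          (!![0, 1, 0, 0; 1, 0, 2, n - 4; 0, 1, 0, n - 4; 0, 1, 2, n - 5] :
            Matrix (Fin 4) (Fin 4) ℕ) i j) := by
  classical
  set G := (Gstar n).deleteEdges {s(a, b)} with hG
  have h0n : 0 < n := by omega
  have hn1 : n - 1 < n := by omega
  set p0 : Fin n := ⟨0, h0n⟩ with hp0def
  set pn : Fin n := ⟨n - 1, hn1⟩ with hpndef
  have hp0n : p0 ≠ pn := by
    intro h
    have : (0 : ℕ) = n - 1 := congrArg Fin.val h
    omega
  have hap0 : a ≠ p0 := fun h => ha0 (by rw [h])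
  have hbp0 : b ≠ p0 := fun h => hb0 (by rw [h])
  have hapn : a ≠ pn := fun h => ha (by rw [h])
  have hbpn : b ≠ pn := fun h => hb (by rw [h])
  have hAdj : ∀ v w : Fin n, G.Adj v w ↔
      (v ≠ w ∧ (v = p0 ∨ w = p0 ∨ (v ≠ pn ∧ w ≠ pn)) ∧
        ¬(v = a ∧ w = b) ∧ ¬(v = b ∧ w = a)) := by
    intro v w
    rw [hG, SimpleGraph.deleteEdges_adj]
    simp only [Set.mem_singleton_iff, Sym2.eq_iff]
    constructor
    · rintro ⟨⟨hne, hor⟩, hnotedge⟩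
      push_neg at hnotedge
      refine ⟨hne, ?_, ?_, ?_⟩
      · rcases hor with h | h | ⟨h1, h2⟩
        · left; exact Fin.ext h
        · right; left; exact Fin.ext h
        · right; right
          exact ⟨fun hc => h1 (by rw [hc]), fun hc => h2 (by rw [hc])⟩
      · rintro ⟨rfl, rfl⟩; exact (hnotedge.1 rfl) rfl
      · rintro ⟨rfl, rfl⟩; exact (hnotedge.2 rfl) rfl
    · rintro ⟨hne, hor, h3, h4⟩
      refine ⟨⟨hne, ?_⟩, ?_⟩
      · rcases hor with rfl | rfl | ⟨h1, h2⟩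
        · left; rfl
        · right; left; rfl
        · right; right
          exact ⟨fun hc => h1 (Fin.ext hc), fun hc => h2 (Fin.ext hc)⟩
      · rintro (⟨rfl, rfl⟩ | ⟨rfl, rfl⟩)
        · exact h3 ⟨rfl, rfl⟩
        · exact h4 ⟨rfl, rfl⟩
  -- neighborhood characterizations
  have hAdjpn : ∀ w, G.Adj pn w ↔ w = p0 := by
    intro w
    rw [hAdj]
    constructor
    · rintro ⟨hne, hor, -, -⟩
      rcases hor with h | h | ⟨h1, -⟩
      · exact absurd h.symm hp0n
      · exact h
      · exact absurd rfl h1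
    · rintro rfl
      exact ⟨fun h => hp0n h.symm, Or.inr (Or.inl rfl),
        fun h => hapn h.1.symm, fun h => hbpn h.1.symm⟩
  have hAdjp0 : ∀ w, G.Adj p0 w ↔ w ≠ p0 := by
    intro w
    rw [hAdj]
    constructor
    · rintro ⟨hne, -, -, -⟩; exact hne.symm
    · intro hne
      exact ⟨hne.symm, Or.inl rfl, fun h => hap0 h.1.symm, fun h => hbp0 h.1.symm⟩
  have hAdja : ∀ w, G.Adj a w ↔ (w ≠ a ∧ w ≠ pn ∧ w ≠ b) := by
    intro w
    rw [hAdj]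
    constructor
    · rintro ⟨hne, hor, h3, -⟩
      refine ⟨hne.symm, ?_, fun h => h3 ⟨rfl, h⟩⟩
      rcases hor with h | h | ⟨-, h2⟩
      · exact absurd h hap0
      · exact fun hc => hp0n (h ▸ hc)
      · exact h2
    · rintro ⟨h1, h2, h3⟩
      refine ⟨h1.symm, Or.inr (Or.inr ⟨hapn, h2⟩), fun h => h3 h.2, fun h => hab h.1⟩
  have hAdjb : ∀ w, G.Adj b w ↔ (w ≠ b ∧ w ≠ pn ∧ w ≠ a) := by
    intro w
    rw [hAdj]
    constructor
    · rintro ⟨hne, hor, -, h4⟩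
      refine ⟨hne.symm, ?_, fun h => h4 ⟨rfl, h⟩⟩
      rcases hor with h | h | ⟨-, h2⟩
      · exact absurd h hbp0
      · exact fun hc => hp0n (by rw [← h, hc])
      · exact h2
    · rintro ⟨h1, h2, h3⟩
      exact ⟨h1.symm, Or.inr (Or.inr ⟨hbpn, h2⟩), fun h => hab h.1.symm, fun h => h3 h.2⟩
  have hAdjgen : ∀ v w : Fin n, v ≠ pn → v ≠ p0 → v ≠ a → v ≠ b →
      (G.Adj v w ↔ (w ≠ v ∧ w ≠ pn)) := by
    intro v w hvpn hvp0 hva hvb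
    rw [hAdj]
    constructor
    · rintro ⟨hne, hor, -, -⟩
      refine ⟨hne.symm, ?_⟩
      rcases hor with h | h | ⟨-, h2⟩
      · exact absurd h hvp0
      · exact fun hc => hp0n (by rw [← h, hc])
      · exact h2
    · rintro ⟨h1, h2⟩
      exact ⟨h1.symm, Or.inr (Or.inr ⟨hvpn, h2⟩), fun h => hva h.1, fun h => hvb h.1⟩
  set p : Fin n → Fin 4 := fun v =>
    if v = pn then 0 else if v = p0 then 1 else if v = a ∨ v = b then 2 else 3 with hpdef
  have hp0 : ∀ v, p v = 0 ↔ v = pn := by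
    intro v
    simp only [hpdef]
    split_ifs with h1 h2 h3
    · simp [h1]
    · exact iff_of_false (by decide) h1
    · exact iff_of_false (by decide) h1
    · exact iff_of_false (by decide) h1
  have hp1 : ∀ v, p v = 1 ↔ v = p0 := by
    intro v
    simp only [hpdef]
    split_ifs with h1 h2 h3
    · exact iff_of_false (by decide) (by rintro rfl; exact hp0n h1)
    · simp [h2]
    · exact iff_of_false (by decide) h2
    · exact iff_of_false (by decide) h2
  have hp2 : ∀ v, p v = 2 ↔ (v = a ∨ v = b) := by
    intro v
    simp only [hpdef]
    split_ifs with h1 h2 h3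
    · exact iff_of_false (by decide) (by rintro (rfl | rfl); exacts [hapn h1, hbpn h1])
    · exact iff_of_false (by decide) (by rintro (rfl | rfl); exacts [hap0 h2, hbp0 h2])
    · exact iff_of_true rfl h3
    · exact iff_of_false (by decide) h3
  have hp3 : ∀ v, p v = 3 ↔ (v ≠ pn ∧ v ≠ p0 ∧ v ≠ a ∧ v ≠ b) := by
    intro v
    simp only [hpdef]
    split_ifs with h1 h2 h3
    · exact iff_of_false (by decide) (fun h => h.1 h1)
    · exact iff_of_false (by decide) (fun h => h.2.1 h2)
    · exact iff_of_false (by decide)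
        (fun h => by rcases h3 with rfl | rfl; exacts [h.2.2.1 rfl, h.2.2.2 rfl])
    · exact iff_of_true rfl ⟨h1, h2, fun h => h3 (Or.inl h), fun h => h3 (Or.inr h)⟩
  set K : Finset (Fin n) := {pn, p0, a, b} with hKdef
  have hKcard : K.card = 4 := by
    rw [hKdef]
    rw [Finset.card_insert_of_notMem (by
      simp only [Finset.mem_insert, Finset.mem_singleton]
      push_neg
      exact ⟨fun h => hp0n h.symm, fun h => hapn h.symm, fun h => hbpn h.symm⟩)]
    rw [Finset.card_insert_of_notMem (by
      simp only [Finset.mem_insert, Finset.mem_singleton]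
      push_neg
      exact ⟨fun h => hap0 h.symm, fun h => hbp0 h.symm⟩)]
    rw [Finset.card_insert_of_notMem (by simpa using hab)]
    simp
  set rest : Finset (Fin n) := Finset.univ \ K with hrestdef
  have hrestcard : rest.card = n - 4 := by
    rw [hrestdef, Finset.card_sdiff_of_subset (Finset.subset_univ _), Finset.card_univ,
      Fintype.card_fin, hKcard]
  have hmemrest : ∀ w, w ∈ rest ↔ (w ≠ pn ∧ w ≠ p0 ∧ w ≠ a ∧ w ≠ b) := by
    intro w
    simp [hrestdef, hKdef, not_or]
  refine ⟨p, ?_, ?_⟩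
  · intro i
    fin_cases i
    · exact ⟨pn, (hp0 pn).mpr rfl⟩
    · exact ⟨p0, (hp1 p0).mpr rfl⟩
    · exact ⟨a, (hp2 a).mpr (Or.inl rfl)⟩
    · have hne : rest.Nonempty := by
        rw [← Finset.card_pos, hrestcard]; omega
      obtain ⟨w, hw⟩ := hne
      exact ⟨w, (hp3 w).mpr ((hmemrest w).mp hw)⟩
  · intro i j v hpv
    fin_cases i <;> fin_cases j <;>
      simp only [Fin.zero_eta, Fin.mk_one, Fin.reduceFinMk, Fin.isValue]
    -- i = 0 : v = pn
    · -- (0,0)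
      have hv : v = pn := (hp0 v).mp hpv
      rw [hv]
      have he : {w | p w = 0 ∧ G.Adj pn w} = ∅ := by
        ext w
        simp only [Set.mem_setOf_eq, Set.mem_empty_iff_false, iff_false, not_and]
        intro h1 h2
        rw [hp0] at h1
        rw [hAdjpn] at h2
        rw [h2] at h1
        exact hp0n h1
      rw [he, Set.ncard_empty]
      simp [Matrix.cons_val_two, Matrix.cons_val_three, Matrix.vecHead, Matrix.vecTail]
    · -- (0,1)
      have hv : v = pn := (hp0 v).mp hpv
      rw [hv]
      have he : {w | p w = 1 ∧ G.Adj pn w} = {p0} := by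
        ext w
        simp only [Set.mem_setOf_eq, Set.mem_singleton_iff]
        constructor
        · rintro ⟨h1, -⟩; exact (hp1 w).mp h1
        · rintro rfl; exact ⟨(hp1 p0).mpr rfl, (hAdjpn p0).mpr rfl⟩
      rw [he, Set.ncard_singleton]
      simp [Matrix.cons_val_two, Matrix.cons_val_three, Matrix.vecHead, Matrix.vecTail]
    · -- (0,2)
      have hv : v = pn := (hp0 v).mp hpv
      rw [hv]
      have he : {w | p w = 2 ∧ G.Adj pn w} = ∅ := by
        ext w
        simp only [Set.mem_setOf_eq, Set.mem_empty_iff_false, iff_false, not_and]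
        intro h1 h2
        rw [hp2] at h1
        rw [hAdjpn] at h2
        rcases h1 with rfl | rfl
        · exact hap0 h2
        · exact hbp0 h2
      rw [he, Set.ncard_empty]
      simp [Matrix.cons_val_two, Matrix.cons_val_three, Matrix.vecHead, Matrix.vecTail]
    · -- (0,3)
      have hv : v = pn := (hp0 v).mp hpv
      rw [hv]
      have he : {w | p w = 3 ∧ G.Adj pn w} = ∅ := by
        ext w
        simp only [Set.mem_setOf_eq, Set.mem_empty_iff_false, iff_false, not_and]
        intro h1 h2
        rw [hp3] at h1
        rw [hAdjpn] at h2
        exact h1.2.1 h2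
      rw [he, Set.ncard_empty]
      simp [Matrix.cons_val_two, Matrix.cons_val_three, Matrix.vecHead, Matrix.vecTail]
    -- i = 1 : v = p0
    · -- (1,0)
      have hv : v = p0 := (hp1 v).mp hpv
      rw [hv]
      have he : {w | p w = 0 ∧ G.Adj p0 w} = {pn} := by
        ext w
        simp only [Set.mem_setOf_eq, Set.mem_singleton_iff]
        constructor
        · rintro ⟨h1, -⟩; exact (hp0 w).mp h1
        · rintro rfl
          exact ⟨(hp0 pn).mpr rfl, (hAdjp0 pn).mpr (fun h => hp0n h.symm)⟩
      rw [he, Set.ncard_singleton]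
      simp [Matrix.cons_val_two, Matrix.cons_val_three, Matrix.vecHead, Matrix.vecTail]
    · -- (1,1)
      have hv : v = p0 := (hp1 v).mp hpv
      rw [hv]
      have he : {w | p w = 1 ∧ G.Adj p0 w} = ∅ := by
        ext w
        simp only [Set.mem_setOf_eq, Set.mem_empty_iff_false, iff_false, not_and]
        intro h1 h2
        rw [hp1] at h1
        rw [hAdjp0] at h2
        exact h2 h1
      rw [he, Set.ncard_empty]
      simp [Matrix.cons_val_two, Matrix.cons_val_three, Matrix.vecHead, Matrix.vecTail]
    · -- (1,2)
      have hv : v = p0 := (hp1 v).mp hpv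
      rw [hv]
      have he : {w | p w = 2 ∧ G.Adj p0 w} = {a, b} := by
        ext w
        simp only [Set.mem_setOf_eq, Set.mem_insert_iff, Set.mem_singleton_iff]
        constructor
        · rintro ⟨h1, -⟩; exact (hp2 w).mp h1
        · rintro (h | h) <;> rw [h]
          · exact ⟨(hp2 a).mpr (Or.inl rfl), (hAdjp0 a).mpr hap0⟩
          · exact ⟨(hp2 b).mpr (Or.inr rfl), (hAdjp0 b).mpr hbp0⟩
      rw [he, Set.ncard_pair hab]
      simp [Matrix.cons_val_two, Matrix.cons_val_three, Matrix.vecHead, Matrix.vecTail]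
    · -- (1,3)
      have hv : v = p0 := (hp1 v).mp hpv
      rw [hv]
      have he : {w | p w = 3 ∧ G.Adj p0 w} = ↑rest := by
        ext w
        simp only [Set.mem_setOf_eq, Finset.coe_sort_coe, Finset.mem_coe]
        rw [hmemrest, hp3, hAdjp0]
        constructor
        · rintro ⟨h1, -⟩; exact h1
        · intro h1; exact ⟨h1, h1.2.1⟩
      rw [he, Set.ncard_coe_finset, hrestcard]
      simp [Matrix.cons_val_two, Matrix.cons_val_three, Matrix.vecHead, Matrix.vecTail]
    -- i = 2 : v = a or v = b
    · -- (2,0)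
      have hv : v = a ∨ v = b := (hp2 v).mp hpv
      have he : {w | p w = 0 ∧ G.Adj v w} = ∅ := by
        ext w
        simp only [Set.mem_setOf_eq, Set.mem_empty_iff_false, iff_false, not_and]
        intro h1 h2
        rw [hp0] at h1
        subst h1
        rcases hv with rfl | rfl
        · exact ((hAdja pn).mp h2).2.1 rfl
        · exact ((hAdjb pn).mp h2).2.1 rfl
      rw [he, Set.ncard_empty]
      simp [Matrix.cons_val_two, Matrix.cons_val_three, Matrix.vecHead, Matrix.vecTail]
    · -- (2,1)
      have hv : v = a ∨ v = b := (hp2 v).mp hpv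
      have he : {w | p w = 1 ∧ G.Adj v w} = {p0} := by
        ext w
        simp only [Set.mem_setOf_eq, Set.mem_singleton_iff]
        constructor
        · rintro ⟨h1, -⟩; exact (hp1 w).mp h1
        · rintro rfl
          refine ⟨(hp1 p0).mpr rfl, ?_⟩
          rcases hv with rfl | rfl
          · exact (hAdja p0).mpr ⟨fun h => hap0 h.symm, hp0n, fun h => hbp0 h.symm⟩
          · exact (hAdjb p0).mpr ⟨fun h => hbp0 h.symm, hp0n, fun h => hap0 h.symm⟩
      rw [he, Set.ncard_singleton]
      simp [Matrix.cons_val_two, Matrix.cons_val_three, Matrix.vecHead, Matrix.vecTail]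
    · -- (2,2)
      have hv : v = a ∨ v = b := (hp2 v).mp hpv
      have he : {w | p w = 2 ∧ G.Adj v w} = ∅ := by
        ext w
        simp only [Set.mem_setOf_eq, Set.mem_empty_iff_false, iff_false, not_and]
        intro h1 h2
        rw [hp2] at h1
        rcases hv with rfl | rfl
        · rcases h1 with rfl | rfl
          · exact ((hAdja w).mp h2).1 rfl
          · exact ((hAdja w).mp h2).2.2 rfl
        · rcases h1 with rfl | rfl
          · exact ((hAdjb w).mp h2).2.2 rfl
          · exact ((hAdjb w).mp h2).1 rfl
      rw [he, Set.ncard_empty]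
      simp [Matrix.cons_val_two, Matrix.cons_val_three, Matrix.vecHead, Matrix.vecTail]
    · -- (2,3)
      have hv : v = a ∨ v = b := (hp2 v).mp hpv
      have he : {w | p w = 3 ∧ G.Adj v w} = ↑rest := by
        ext w
        simp only [Set.mem_setOf_eq, Finset.coe_sort_coe, Finset.mem_coe]
        rw [hmemrest, hp3]
        constructor
        · rintro ⟨h1, -⟩; exact h1
        · intro h1
          refine ⟨h1, ?_⟩
          rcases hv with rfl | rfl
          · exact (hAdja w).mpr ⟨h1.2.2.1, h1.1, h1.2.2.2⟩
          · exact (hAdjb w).mpr ⟨h1.2.2.2, h1.1, h1.2.2.1⟩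
      rw [he, Set.ncard_coe_finset, hrestcard]
      simp [Matrix.cons_val_two, Matrix.cons_val_three, Matrix.vecHead, Matrix.vecTail]
    -- i = 3
    · -- (3,0)
      obtain ⟨hvpn, hvp0, hva, hvb⟩ := (hp3 v).mp hpv
      have he : {w | p w = 0 ∧ G.Adj v w} = ∅ := by
        ext w
        simp only [Set.mem_setOf_eq, Set.mem_empty_iff_false, iff_false, not_and]
        intro h1 h2
        rw [hp0] at h1
        subst h1
        exact ((hAdjgen v pn hvpn hvp0 hva hvb).mp h2).2 rfl
      rw [he, Set.ncard_empty]
      simp [Matrix.cons_val_two, Matrix.cons_val_three, Matrix.vecHead, Matrix.vecTail]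
    · -- (3,1)
      obtain ⟨hvpn, hvp0, hva, hvb⟩ := (hp3 v).mp hpv
      have he : {w | p w = 1 ∧ G.Adj v w} = {p0} := by
        ext w
        simp only [Set.mem_setOf_eq, Set.mem_singleton_iff]
        constructor
        · rintro ⟨h1, -⟩; exact (hp1 w).mp h1
        · rintro rfl
          exact ⟨(hp1 p0).mpr rfl,
            (hAdjgen v p0 hvpn hvp0 hva hvb).mpr ⟨fun h => hvp0 h.symm, hp0n⟩⟩
      rw [he, Set.ncard_singleton]
      simp [Matrix.cons_val_two, Matrix.cons_val_three, Matrix.vecHead, Matrix.vecTail]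
    · -- (3,2)
      obtain ⟨hvpn, hvp0, hva, hvb⟩ := (hp3 v).mp hpv
      have he : {w | p w = 2 ∧ G.Adj v w} = {a, b} := by
        ext w
        simp only [Set.mem_setOf_eq, Set.mem_insert_iff, Set.mem_singleton_iff]
        constructor
        · rintro ⟨h1, -⟩; exact (hp2 w).mp h1
        · rintro (h | h) <;> rw [h]
          · exact ⟨(hp2 a).mpr (Or.inl rfl),
              (hAdjgen v a hvpn hvp0 hva hvb).mpr ⟨fun h' => hva h'.symm, hapn⟩⟩
          · exact ⟨(hp2 b).mpr (Or.inr rfl),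
              (hAdjgen v b hvpn hvp0 hva hvb).mpr ⟨fun h' => hvb h'.symm, hbpn⟩⟩
      rw [he, Set.ncard_pair hab]
      simp [Matrix.cons_val_two, Matrix.cons_val_three, Matrix.vecHead, Matrix.vecTail]
    · -- (3,3)
      obtain ⟨hvpn, hvp0, hva, hvb⟩ := (hp3 v).mp hpv
      have hvrest : v ∈ rest := (hmemrest v).mpr ⟨hvpn, hvp0, hva, hvb⟩
      have he : {w | p w = 3 ∧ G.Adj v w} = ↑(rest.erase v) := by
        ext w
        simp only [Set.mem_setOf_eq, Finset.coe_sort_coe, Finset.mem_coe,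
          Finset.mem_erase]
        rw [hmemrest, hp3]
        constructor
        · rintro ⟨h1, h2⟩
          exact ⟨((hAdjgen v w hvpn hvp0 hva hvb).mp h2).1, h1⟩
        · rintro ⟨h1, h2⟩
          exact ⟨h2, (hAdjgen v w hvpn hvp0 hva hvb).mpr ⟨h1, h2.1⟩⟩
      rw [he, Set.ncard_coe_finset, Finset.card_erase_of_mem hvrest, hrestcard]
      have : n - 4 - 1 = n - 5 := by omega
      rw [this]
      simp [Matrix.cons_val_two, Matrix.cons_val_three, Matrix.vecHead, Matrix.vecTail]

open Matrix in
set_option maxHeartbeats 1000000 in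
lemma aux_specRad {n : ℕ} (hn : 5 ≤ n) (a b : Fin n) (hab : a ≠ b)
    (ha0 : a.val ≠ 0) (hb0 : b.val ≠ 0) (ha : a.val ≠ n - 1) (hb : b.val ≠ n - 1) :
    specRad ((Gstar n).deleteEdges {s(a, b)}) < (n : ℝ) - 2 := by
  classical
  set G := (Gstar n).deleteEdges {s(a, b)} with hG
  have h0n : 0 < n := by omega
  have hn1 : n - 1 < n := by omega
  set p0 : Fin n := ⟨0, h0n⟩ with hp0def
  set pn : Fin n := ⟨n - 1, hn1⟩ with hpndef
  have hp0n : p0 ≠ pn := by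
    intro h
    have : (0 : ℕ) = n - 1 := congrArg Fin.val h
    omega
  have hap0 : a ≠ p0 := fun h => ha0 (by rw [h])
  have hbp0 : b ≠ p0 := fun h => hb0 (by rw [h])
  have hapn : a ≠ pn := fun h => ha (by rw [h])
  have hbpn : b ≠ pn := fun h => hb (by rw [h])
  have hAdj : ∀ v w : Fin n, G.Adj v w ↔
      (v ≠ w ∧ (v = p0 ∨ w = p0 ∨ (v ≠ pn ∧ w ≠ pn)) ∧
        ¬(v = a ∧ w = b) ∧ ¬(v = b ∧ w = a)) := by
    intro v w
    rw [hG, SimpleGraph.deleteEdges_adj]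
    simp only [Set.mem_singleton_iff, Sym2.eq_iff]
    constructor
    · rintro ⟨⟨hne, hor⟩, hnotedge⟩
      push_neg at hnotedge
      refine ⟨hne, ?_, ?_, ?_⟩
      · rcases hor with h | h | ⟨h1, h2⟩
        · left; exact Fin.ext h
        · right; left; exact Fin.ext h
        · right; right
          exact ⟨fun hc => h1 (by rw [hc]), fun hc => h2 (by rw [hc])⟩
      · rintro ⟨rfl, rfl⟩; exact (hnotedge.1 rfl) rfl
      · rintro ⟨rfl, rfl⟩; exact (hnotedge.2 rfl) rfl
    · rintro ⟨hne, hor, h3, h4⟩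
      refine ⟨⟨hne, ?_⟩, ?_⟩
      · rcases hor with rfl | rfl | ⟨h1, h2⟩
        · left; rfl
        · right; left; rfl
        · right; right
          exact ⟨fun hc => h1 (Fin.ext hc), fun hc => h2 (Fin.ext hc)⟩
      · rintro (⟨rfl, rfl⟩ | ⟨rfl, rfl⟩)
        · exact h3 ⟨rfl, rfl⟩
        · exact h4 ⟨rfl, rfl⟩
  set K : Finset (Fin n) := {pn, p0, a, b} with hKdef
  have hpnK : pn ∉ ({p0, a, b} : Finset (Fin n)) := by
    simp only [Finset.mem_insert, Finset.mem_singleton]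
    push_neg
    exact ⟨fun h => hp0n h.symm, fun h => hapn h.symm, fun h => hbpn h.symm⟩
  have hp0K : p0 ∉ ({a, b} : Finset (Fin n)) := by
    simp only [Finset.mem_insert, Finset.mem_singleton]
    push_neg
    exact ⟨fun h => hap0 h.symm, fun h => hbp0 h.symm⟩
  have haK : a ∉ ({b} : Finset (Fin n)) := by simpa using hab
  have hKcard : K.card = 4 := by
    rw [hKdef, Finset.card_insert_of_notMem hpnK, Finset.card_insert_of_notMem hp0K,
      Finset.card_insert_of_notMem haK]
    simp
  set rest : Finset (Fin n) := Finset.univ \ K with hrestdef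
  have hrestcard : rest.card = n - 4 := by
    rw [hrestdef, Finset.card_sdiff_of_subset (Finset.subset_univ _), Finset.card_univ,
      Fintype.card_fin, hKcard]
  have hsplit : ∀ f : Fin n → ℝ,
      ∑ v, f v = f pn + f p0 + f a + f b + ∑ v ∈ rest, f v := by
    intro f
    have h1 : ∑ v ∈ K, f v = f pn + f p0 + f a + f b := by
      rw [hKdef, Finset.sum_insert hpnK, Finset.sum_insert hp0K, Finset.sum_insert haK,
        Finset.sum_singleton]
      ring
    have h2 : ∑ v ∈ rest, f v + ∑ v ∈ K, f v = ∑ v, f v :=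
      Finset.sum_sdiff (Finset.subset_univ K)
    rw [← h2, h1]; ring
  -- reduce to eigenvalue bound
  have key : ∀ i : Fin n, (adjMat_isHermitian G).eigenvalues i < (n : ℝ) - 2 := by
    intro i
    set hherm := adjMat_isHermitian G
    set A := adjMat G with hA
    set x : Fin n → ℝ := ⇑(hherm.eigenvectorBasis i) with hx
    have hnorm1 : ‖hherm.eigenvectorBasis i‖ = 1 := hherm.eigenvectorBasis.orthonormal.1 i
    have hsq : ∑ k, x k ^ 2 = 1 := by
      have h2 : ‖hherm.eigenvectorBasis i‖ ^ 2 = 1 := by rw [hnorm1]; norm_num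
      rw [EuclideanSpace.norm_eq] at h2
      rw [Real.sq_sqrt (by positivity)] at h2
      simpa [Real.norm_eq_abs, sq_abs] using h2
    have heig : A *ᵥ x = hherm.eigenvalues i • x := hherm.mulVec_eigenvectorBasis i
    have hmu : hherm.eigenvalues i = ∑ v, x v * (A *ᵥ x) v := by
      rw [heig]
      simp only [Pi.smul_apply, smul_eq_mul]
      have : ∑ v, x v * (hherm.eigenvalues i * x v) = hherm.eigenvalues i * ∑ v, x v ^ 2 := by
        rw [Finset.mul_sum]
        exact Finset.sum_congr rfl (fun v _ => by ring)
      rw [this, hsq, mul_one]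
    have hAvw : ∀ v w, A v w = if G.Adj v w then (1 : ℝ) else 0 := by
      intro v w
      simp [hA, adjMat, SimpleGraph.adjMatrix]
    have hmu2 : hherm.eigenvalues i = ∑ v, ∑ w, (if G.Adj v w then x v * x w else 0) := by
      rw [hmu]
      refine Finset.sum_congr rfl (fun v _ => ?_)
      rw [Matrix.mulVec, dotProduct, Finset.mul_sum]
      refine Finset.sum_congr rfl (fun w _ => ?_)
      rw [hAvw]
      split_ifs <;> ring
    -- pointwise decomposition
    have hpt : ∀ v w : Fin n, (if G.Adj v w then x v * x w else 0) =
        x v * x w - (if v = w then x v * x w else 0)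
        - (if v = pn ∧ (w ≠ p0 ∧ w ≠ pn) then x v * x w else 0)
        - (if w = pn ∧ (v ≠ p0 ∧ v ≠ pn) then x v * x w else 0)
        - (if v = a ∧ w = b then x v * x w else 0)
        - (if v = b ∧ w = a then x v * x w else 0) := by
      intro v w
      by_cases h1 : v = w
      · subst h1
        have c1 : ¬ G.Adj v v := G.irrefl
        have c2 : ¬(v = pn ∧ (v ≠ p0 ∧ v ≠ pn)) := fun h => h.2.2 h.1
        have c3 : ¬(v = a ∧ v = b) := fun h => hab (h.1.symm.trans h.2)
        have c4 : ¬(v = b ∧ v = a) := fun h => hab (h.2.symm.trans h.1)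
        rw [if_neg c1, if_pos rfl, if_neg c2, if_neg c3, if_neg c4]
        ring
      · by_cases h2 : G.Adj v w
        · rw [if_pos h2, if_neg h1]
          rw [hAdj] at h2
          obtain ⟨-, hor, hn3, hn4⟩ := h2
          have hc1 : ¬(v = pn ∧ (w ≠ p0 ∧ w ≠ pn)) := by
            rintro ⟨hv, hwp0, hwpn⟩
            rcases hor with h | h | ⟨hh, -⟩
            · exact hp0n (h.symm.trans hv)
            · exact hwp0 h
            · exact hh hv
          have hc2 : ¬(w = pn ∧ (v ≠ p0 ∧ v ≠ pn)) := by
            rintro ⟨hw, hvp0, hvpn⟩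
            rcases hor with h | h | ⟨-, hh⟩
            · exact hvp0 h
            · exact hp0n (h.symm.trans hw)
            · exact hh hw
          rw [if_neg hc1, if_neg hc2, if_neg hn3, if_neg hn4]
          ring
        · rw [if_neg h2, if_neg h1]
          rw [hAdj] at h2
          push_neg at h2
          rcases Classical.em (v = a ∧ w = b) with h3 | h3
          · have c2 : ¬(v = pn ∧ (w ≠ p0 ∧ w ≠ pn)) := fun h => hapn (h3.1.symm.trans h.1)
            have c3 : ¬(w = pn ∧ (v ≠ p0 ∧ v ≠ pn)) := fun h => hbpn (h3.2.symm.trans h.1)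
            have c4 : ¬(v = b ∧ w = a) := fun h => hab (h3.1.symm.trans h.1)
            rw [if_pos h3, if_neg c2, if_neg c3, if_neg c4]
            ring
          · rcases Classical.em (v = b ∧ w = a) with h4 | h4
            · have c2 : ¬(v = pn ∧ (w ≠ p0 ∧ w ≠ pn)) := fun h => hbpn (h4.1.symm.trans h.1)
              have c3 : ¬(w = pn ∧ (v ≠ p0 ∧ v ≠ pn)) := fun h => hapn (h4.2.symm.trans h.1)
              rw [if_pos h4, if_neg c2, if_neg c3, if_neg h3]
              ring
            · have h6 : ¬(v = p0 ∨ w = p0 ∨ (v ≠ pn ∧ w ≠ pn)) := by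
                intro hor
                exact h4 (h2 h1 hor (fun hva hwb => h3 ⟨hva, hwb⟩))
              push_neg at h6
              obtain ⟨hvp0, hwp0, h7⟩ := h6
              rcases Classical.em (v = pn) with hv | h8
              · have hwpn : w ≠ pn := fun h => h1 (hv.trans h.symm)
                have c1 : (v = pn ∧ (w ≠ p0 ∧ w ≠ pn)) := ⟨hv, hwp0, hwpn⟩
                have c2 : ¬(w = pn ∧ (v ≠ p0 ∧ v ≠ pn)) := fun h => hwpn h.1
                have c3 : ¬(v = a ∧ w = b) := fun h => hapn (h.1.symm.trans hv)
                have c4 : ¬(v = b ∧ w = a) := fun h => hbpn (h.1.symm.trans hv)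
                rw [if_pos c1, if_neg c2, if_neg c3, if_neg c4]
                ring
              · have hwpn : w = pn := by
                  rcases Classical.em (w = pn) with h | h
                  · exact h
                  · exact absurd (h7 h8) h
                have c1 : ¬(v = pn ∧ (w ≠ p0 ∧ w ≠ pn)) := fun h => h8 h.1
                have c2 : (w = pn ∧ (v ≠ p0 ∧ v ≠ pn)) := ⟨hwpn, hvp0, h8⟩
                have c3 : ¬(v = a ∧ w = b) := fun h => hbpn (h.2.symm.trans hwpn)
                have c4 : ¬(v = b ∧ w = a) := fun h => hapn (h.2.symm.trans hwpn)
                rw [if_neg c1, if_pos c2, if_neg c3, if_neg c4]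
                ring
    -- sum computation
    set S : ℝ := ∑ v, x v with hS
    have E1 : ∑ v : Fin n, ∑ w : Fin n, x v * x w = S * S := by
      rw [hS, Finset.sum_mul_sum]
    have E2 : ∑ v : Fin n, ∑ w : Fin n, (if v = w then x v * x w else 0) = 1 := by
      rw [← hsq]
      refine Finset.sum_congr rfl (fun v _ => ?_)
      simp only [Finset.sum_ite_eq, Finset.mem_univ, if_pos]
      ring
    have inner_aux : ∀ c : ℝ, ∑ w : Fin n, (if w ≠ p0 ∧ w ≠ pn then c * x w else 0) =
        c * S - c * x p0 - c * x pn := by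
      intro c
      have hpt2 : ∀ w : Fin n, (if w ≠ p0 ∧ w ≠ pn then c * x w else 0) =
          c * x w - (if w = p0 then c * x w else 0) - (if w = pn then c * x w else 0) := by
        intro w
        by_cases hw1 : w = p0
        · subst hw1
          rw [if_neg (fun h => h.1 rfl), if_pos rfl, if_neg (fun h => hp0n h)]
          ring
        · by_cases hw2 : w = pn
          · subst hw2
            rw [if_neg (fun h => h.2 rfl), if_neg hw1, if_pos rfl]
            ring
          · rw [if_pos ⟨hw1, hw2⟩, if_neg hw1, if_neg hw2]
            ring
      rw [Finset.sum_congr rfl (fun w _ => hpt2 w)]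
      rw [Finset.sum_sub_distrib, Finset.sum_sub_distrib]
      simp only [Finset.sum_ite_eq', Finset.mem_univ, if_pos]
      rw [hS, Finset.mul_sum]
    have E3 : ∑ v : Fin n, ∑ w : Fin n,
        (if v = pn ∧ (w ≠ p0 ∧ w ≠ pn) then x v * x w else 0) =
        x pn * S - x pn * x p0 - x pn * x pn := by
      have : ∀ v : Fin n, ∑ w : Fin n, (if v = pn ∧ (w ≠ p0 ∧ w ≠ pn) then x v * x w else 0) =
          if v = pn then ∑ w : Fin n, (if w ≠ p0 ∧ w ≠ pn then x v * x w else 0) else 0 := by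
        intro v
        by_cases hv : v = pn
        · rw [if_pos hv]
          exact Finset.sum_congr rfl (fun w _ => by rw [ite_and, if_pos hv])
        · rw [if_neg hv]
          rw [Finset.sum_congr rfl (fun w _ => by rw [ite_and, if_neg hv])]
          simp
      rw [Finset.sum_congr rfl (fun v _ => this v)]
      simp only [Finset.sum_ite_eq', Finset.mem_univ, if_pos]
      exact inner_aux (x pn)
    have E4 : ∑ v : Fin n, ∑ w : Fin n,
        (if w = pn ∧ (v ≠ p0 ∧ v ≠ pn) then x v * x w else 0) =
        x pn * S - x pn * x p0 - x pn * x pn := by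
      have : ∀ v : Fin n, ∑ w : Fin n, (if w = pn ∧ (v ≠ p0 ∧ v ≠ pn) then x v * x w else 0) =
          (if v ≠ p0 ∧ v ≠ pn then x pn * x v else 0) := by
        intro v
        by_cases hv : v ≠ p0 ∧ v ≠ pn
        · rw [if_pos hv]
          rw [Finset.sum_congr rfl (fun w _ => by
            show (if w = pn ∧ (v ≠ p0 ∧ v ≠ pn) then x v * x w else 0) =
              (if w = pn then x v * x w else 0)
            by_cases hw : w = pn
            · rw [if_pos (⟨hw, hv⟩ : w = pn ∧ (v ≠ p0 ∧ v ≠ pn)), if_pos hw]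
            · rw [if_neg (fun h => hw h.1 : ¬(w = pn ∧ (v ≠ p0 ∧ v ≠ pn))), if_neg hw])]
          simp only [Finset.sum_ite_eq', Finset.mem_univ, if_pos]
          ring
        · rw [if_neg hv]
          rw [Finset.sum_congr rfl (fun w _ =>
            show (if w = pn ∧ (v ≠ p0 ∧ v ≠ pn) then x v * x w else 0) = (0:ℝ) from
            if_neg (fun h => hv h.2))]
          simp
      rw [Finset.sum_congr rfl (fun v _ => this v)]
      exact inner_aux (x pn)
    have E5 : ∑ v : Fin n, ∑ w : Fin n, (if v = a ∧ w = b then x v * x w else 0) =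
        x a * x b := by
      have : ∀ v : Fin n, ∑ w : Fin n, (if v = a ∧ w = b then x v * x w else 0) =
          if v = a then x v * x b else 0 := by
        intro v
        by_cases hv : v = a
        · rw [if_pos hv]
          rw [Finset.sum_congr rfl (fun w _ => by rw [ite_and, if_pos hv])]
          simp only [Finset.sum_ite_eq', Finset.mem_univ, if_pos]
        · rw [if_neg hv]
          rw [Finset.sum_congr rfl (fun w _ => by rw [ite_and, if_neg hv])]
          simp
      rw [Finset.sum_congr rfl (fun v _ => this v)]
      simp only [Finset.sum_ite_eq', Finset.mem_univ, if_pos]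
    have E6 : ∑ v : Fin n, ∑ w : Fin n, (if v = b ∧ w = a then x v * x w else 0) =
        x b * x a := by
      have : ∀ v : Fin n, ∑ w : Fin n, (if v = b ∧ w = a then x v * x w else 0) =
          if v = b then x v * x a else 0 := by
        intro v
        by_cases hv : v = b
        · rw [if_pos hv]
          rw [Finset.sum_congr rfl (fun w _ => by rw [ite_and, if_pos hv])]
          simp only [Finset.sum_ite_eq', Finset.mem_univ, if_pos]
        · rw [if_neg hv]
          rw [Finset.sum_congr rfl (fun w _ => by rw [ite_and, if_neg hv])]
          simp
      rw [Finset.sum_congr rfl (fun v _ => this v)]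
      simp only [Finset.sum_ite_eq', Finset.mem_univ, if_pos]
    have hmu3 : hherm.eigenvalues i =
        S * S - 1 - 2 * (x pn * S - x pn * x p0 - x pn * x pn) - 2 * (x a * x b) := by
      rw [hmu2]
      rw [Finset.sum_congr rfl (fun v _ => Finset.sum_congr rfl (fun w _ => hpt v w))]
      simp only [Finset.sum_sub_distrib]
      rw [E1, E2, E3, E4, E5, E6]
      ring
    -- apply the key inequality
    set W : ℝ := ∑ v ∈ rest, x v with hW
    set R : ℝ := ∑ v ∈ rest, x v ^ 2 with hR
    have hSsplit : S = x pn + x p0 + x a + x b + W := hsplit x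
    have hRsplit : (1 : ℝ) = x pn ^ 2 + x p0 ^ 2 + x a ^ 2 + x b ^ 2 + R := by
      rw [← hsq]; exact hsplit (fun v => x v ^ 2)
    have hCS : W ^ 2 ≤ ((n - 4 : ℕ) : ℝ) * R := by
      have := sq_sum_le_card_mul_sum_sq (s := rest) (f := x)
      rwa [hrestcard] at this
    have hm : (1 : ℝ) ≤ ((n - 4 : ℕ) : ℝ) := by
      have : (1 : ℕ) ≤ n - 4 := by omega
      exact_mod_cast this
    have hpos : 0 < x p0 ^ 2 + x pn ^ 2 + x a ^ 2 + x b ^ 2 + R := by nlinarith [hRsplit]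
    have hkey := key_ineq ((n - 4 : ℕ) : ℝ) (x p0) (x pn) (x a) (x b) W R hm hCS hpos
    have hcast : ((n - 4 : ℕ) : ℝ) = (n : ℝ) - 4 := by
      have : (4 : ℕ) ≤ n := by omega
      push_cast [Nat.cast_sub this]
      ring
    rw [hmu3]
    have h1 : S = x p0 + x pn + x a + x b + W := by linarith [hSsplit]
    have hsum1 : x p0 ^ 2 + x pn ^ 2 + x a ^ 2 + x b ^ 2 + R = 1 := by linarith [hRsplit]
    rw [hcast, hsum1] at hkey
    have hkey2 : S ^ 2 < ((n : ℝ) - 4 + 3) * 1 + 2 * x pn * (x a + x b + W) + 2 * x a * x b := by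
      calc S ^ 2 = (x p0 + x pn + x a + x b + W) ^ 2 := by rw [h1]
        _ < _ := hkey
    have e1 : x pn * S - x pn * x p0 - x pn * x pn = x pn * (x a + x b + W) := by
      rw [h1]; ring
    have e2 : S * S = S ^ 2 := by ring
    nlinarith [hkey2, e1, e2]
  -- conclude
  haveI : Nonempty (Fin n) := ⟨p0⟩
  obtain ⟨i0, hi0⟩ := exists_eq_ciSup_of_finite
    (f := fun i => (adjMat_isHermitian G).eigenvalues i)
  show (⨆ i, (adjMat_isHermitian G).eigenvalues i) < (n : ℝ) - 2
  rw [← hi0]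
  exact key i0


/-- Deleting from `G^* = K_1 ∨ (K_{n-2} ∪ K_1)` an edge of the `K_{n-2}` not
incident with the dominating vertex (vertex `0`) yields a graph with an equitable
partition into four parts with the stated quotient matrix, and with spectral
radius less than `n - 2`. -/
theorem deleted_edge_Gstar {n : ℕ} (hn : 5 ≤ n) (a b : Fin n) (hab : a ≠ b)
    (ha0 : a.val ≠ 0) (hb0 : b.val ≠ 0) (ha : a.val ≠ n - 1) (hb : b.val ≠ n - 1) :
    (∃ p : Fin n → Fin 4, Function.Surjective p ∧
      ∀ (i j : Fin 4) (v : Fin n), p v = i →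
        {w : Fin n | p w = j ∧ ((Gstar n).deleteEdges {s(a, b)}).Adj v w}.ncard =
          (!![0, 1, 0, 0; 1, 0, 2, n - 4; 0, 1, 0, n - 4; 0, 1, 2, n - 5] :
            Matrix (Fin 4) (Fin 4) ℕ) i j) ∧
    specRad ((Gstar n).deleteEdges {s(a, b)}) < (n : ℝ) - 2 := by
  exact ⟨aux_partition hn a b hab ha0 hb0 ha hb, aux_specRad hn a b hab ha0 hb0 ha hb⟩
end
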